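/- arXiv:2004.09592 — 8 statements merged into one kernel-verified Lean document; each statement's English description precedes it below -/
import Mathlib

section
/- Let w : [0,1] → [0,1] be a continuous, strictly increasing function with w(0) = 0 and w(1) = 1. Suppose that for all real numbers a₁, c₁, b, c₂, a₂ with 0 ≤ a₁ < c₁ < b < c₂ < a₂ ≤ 1 and (a₂ - b)(b - c₁) = (b - a₁)(c₂ - b), we have (w(a₂) - w(b))(w(b) - w(c₁)) = (w(b) - w(a₁))(w(c₂) - w(b)). Then w(p) = p for all p ∈ [0,1]. -/
theorem stmt_0 (w : ℝ → ℝ)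
    (hmap : ∀ p ∈ Set.Icc (0:ℝ) 1, w p ∈ Set.Icc (0:ℝ) 1)
    (hcont : ContinuousOn w (Set.Icc 0 1))
    (hmono : StrictMonoOn w (Set.Icc 0 1))
    (h0 : w 0 = 0) (h1 : w 1 = 1)
    (hfe : ∀ a₁ c₁ b c₂ a₂ : ℝ, 0 ≤ a₁ → a₁ < c₁ → c₁ < b → b < c₂ → c₂ < a₂ → a₂ ≤ 1 →
      (a₂ - b) * (b - c₁) = (b - a₁) * (c₂ - b) →
      (w a₂ - w b) * (w b - w c₁) = (w b - w a₁) * (w c₂ - w b)) :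
    ∀ p ∈ Set.Icc (0:ℝ) 1, w p = p := by
  have hwlt : ∀ x y : ℝ, 0 ≤ x → x < y → y ≤ 1 → w x < w y := by
    intro x y hx hxy hy
    exact hmono ⟨hx, by linarith⟩ ⟨by linarith, hy⟩ hxy
  -- symmetric instance of the functional equation
  have hsym : ∀ b h t : ℝ, 0 < h → h < t → 0 ≤ b - t → b + t ≤ 1 →
      (w (b+t) - w b) * (w b - w (b-h)) = (w b - w (b-t)) * (w (b+h) - w b) := by
    intro b h t h1 h2 h3 h4
    exact hfe (b-t) (b-h) b (b+h) (b+t) h3 (by linarith) (by linarith)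
      (by linarith) (by linarith) h4 (by ring)
  have hsym' : ∀ b s t : ℝ, 0 < s → 0 < t → 0 ≤ b - s → 0 ≤ b - t → b + s ≤ 1 → b + t ≤ 1 →
      (w (b+t) - w b) * (w b - w (b-s)) = (w b - w (b-t)) * (w (b+s) - w b) := by
    intro b s t hs ht hbs hbt hs1 ht1
    rcases lt_trichotomy s t with h | h | h
    · exact hsym b s t hs h hbt ht1
    · subst h; ring
    · have := hsym b t s ht h hbs hs1
      linear_combination -this
  obtain ⟨c, hcpos, hB⟩ : ∃ c : ℝ → ℝ, (∀ b : ℝ, 0 < b → b < 1 → 0 < c b) ∧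
      (∀ b t : ℝ, 0 < b → b < 1 → 0 < t → t ≤ min b (1-b) →
        w (b+t) - w b = c b * (w b - w (b-t))) := by
    refine ⟨fun b => (w (b + min b (1-b)) - w b) / (w b - w (b - min b (1-b))), ?_, ?_⟩
    · intro b h1 h2
      have hmpos : 0 < min b (1-b) := lt_min h1 (by linarith)
      have hmle : min b (1-b) ≤ b := min_le_left _ _
      have hmle' : min b (1-b) ≤ 1 - b := min_le_right _ _
      have hnum : 0 < w (b + min b (1-b)) - w b := by
        have := hwlt b (b + min b (1-b)) (le_of_lt h1) (by linarith) (by linarith)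
        linarith
      have hden : 0 < w b - w (b - min b (1-b)) := by
        have := hwlt (b - min b (1-b)) b (by linarith) (by linarith) (le_of_lt h2)
        linarith
      exact div_pos hnum hden
    · intro b t h1 h2 ht htm
      have hmpos : 0 < min b (1-b) := lt_min h1 (by linarith)
      have hmle : min b (1-b) ≤ b := min_le_left _ _
      have hmle' : min b (1-b) ≤ 1 - b := min_le_right _ _
      have key := hsym' b t (min b (1-b)) ht hmpos (by linarith) (by linarith)
        (by linarith) (by linarith)
      have hden : 0 < w b - w (b - min b (1-b)) := by
        have := hwlt (b - min b (1-b)) b (by linarith) (by linarith) (le_of_lt h2)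
        linarith
      rw [div_mul_eq_mul_div, eq_div_iff (ne_of_gt hden)]
      linear_combination -key
  -- c x * c y = 1 for suitable pairs
  have hD : ∀ x y : ℝ, 0 < x → x < y → y < 1 → y ≤ 3*x → 3*y - x ≤ 2 → c x * c y = 1 := by
    intro x y hx hxy hy h3 h4
    have hx1 : x < 1 := lt_trans hxy hy
    have hi := hB ((x+y)/2) ((y-x)/2) (by linarith) (by linarith) (by linarith)
      (le_min (by linarith) (by linarith))
    have hii := hB ((x+y)/2) (y-x) (by linarith) (by linarith) (by linarith)
      (le_min (by linarith) (by linarith))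
    have hiii := hB y ((y-x)/2) (by linarith) hy (by linarith)
      (le_min (by linarith) (by linarith))
    have hiv := hB x ((y-x)/2) hx hx1 (by linarith)
      (le_min (by linarith) (by linarith))
    have e1 : (x+y)/2 + (y-x)/2 = y := by ring
    have e2 : (x+y)/2 - (y-x)/2 = x := by ring
    have e3 : (x+y)/2 + (y-x) = (3*y-x)/2 := by ring
    have e4 : (x+y)/2 - (y-x) = (3*x-y)/2 := by ring
    have e5 : y + (y-x)/2 = (3*y-x)/2 := by ring
    have e6 : y - (y-x)/2 = (x+y)/2 := by ring
    have e7 : x + (y-x)/2 = (x+y)/2 := by ring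
    have e8 : x - (y-x)/2 = (3*x-y)/2 := by ring
    rw [e1, e2] at hi
    rw [e3, e4] at hii
    rw [e5, e6] at hiii
    rw [e7, e8] at hiv
    have hG : 0 < w ((x+y)/2) - w x := by
      have := hwlt x ((x+y)/2) (le_of_lt hx) (by linarith) (by linarith)
      linarith
    have hcb : 0 < c ((x+y)/2) := hcpos _ (by linarith) (by linarith)
    have eA : w ((3*y-x)/2) - w y = c y * c ((x+y)/2) * (w ((x+y)/2) - w x) := by
      linear_combination hiii + c y * hi
    have eB : w ((3*y-x)/2) - w y = c ((x+y)/2) * (w x - w ((3*x-y)/2)) := by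
      linear_combination hii - hi
    have e9 : c y * (w ((x+y)/2) - w x) = w x - w ((3*x-y)/2) := by
      have h' : c ((x+y)/2) * (c y * (w ((x+y)/2) - w x)) =
          c ((x+y)/2) * (w x - w ((3*x-y)/2)) := by
        linear_combination eB - eA
      exact mul_left_cancel₀ (ne_of_gt hcb) h'
    have e10 : (c x * c y) * (w ((x+y)/2) - w x) = 1 * (w ((x+y)/2) - w x) := by
      linear_combination c x * e9 - hiv
    exact mul_right_cancel₀ (ne_of_gt hG) e10
  -- c ≡ 1
  have hE : ∀ b : ℝ, 0 < b → b < 1 → c b = 1 := by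
    intro b h1 h2
    have hM1 : b < min (3*b) ((2+b)/3) := lt_min (by linarith) (by linarith)
    have hM2 : min (3*b) ((2+b)/3) ≤ 3*b := min_le_left _ _
    have hM3 : min (3*b) ((2+b)/3) ≤ (2+b)/3 := min_le_right _ _
    set M := min (3*b) ((2+b)/3) with hMdef
    set y1 := b + (M-b)/4 with hy1def
    set y2 := b + (M-b)/2 with hy2def
    have hby1 : b < y1 := by rw [hy1def]; linarith
    have h1y2 : y1 < y2 := by rw [hy1def, hy2def]; linarith
    have hy2M : y2 < M := by rw [hy2def]; linarith
    have hMlt1 : M < 1 := by linarith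
    have d1 : c b * c y1 = 1 := hD b y1 h1 hby1 (by linarith) (by linarith) (by linarith)
    have d2 : c b * c y2 = 1 := hD b y2 h1 (by linarith) (by linarith) (by linarith) (by linarith)
    have d3 : c y1 * c y2 = 1 := hD y1 y2 (by linarith) h1y2 (by linarith) (by linarith)
      (by linarith)
    have hcb : 0 < c b := hcpos b h1 h2
    have hcy2 : 0 < c y2 := hcpos _ (by linarith) (by linarith)
    have heq : c y1 = c y2 := mul_left_cancel₀ (ne_of_gt hcb) (by rw [d1, d2])
    rw [heq] at d3
    have hz : (c y2 - 1) * (c y2 + 1) = 0 := by linear_combination d3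
    rcases mul_eq_zero.1 hz with h | h
    · have hy2one : c y2 = 1 := by linarith
      rw [heq, hy2one, mul_one] at d1
      exact d1
    · linarith
  -- midpoint property
  have hmid : ∀ x y : ℝ, 0 ≤ x → x < y → y ≤ 1 → w x + w y = 2 * w ((x+y)/2) := by
    intro x y hx hxy hy
    have hb1 : 0 < (x+y)/2 := by linarith
    have hb2 : (x+y)/2 < 1 := by linarith
    have hB' := hB ((x+y)/2) ((y-x)/2) hb1 hb2 (by linarith)
      (le_min (by linarith) (by linarith))
    rw [hE _ hb1 hb2, one_mul] at hB'
    have e1 : (x+y)/2 + (y-x)/2 = y := by ring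
    have e2 : (x+y)/2 - (y-x)/2 = x := by ring
    rw [e1, e2] at hB'
    linarith
  have hfc : ContinuousOn (fun x => w x - x) (Set.Icc (0:ℝ) 1) := hcont.sub continuousOn_id
  have hgc : ContinuousOn (fun x => x - w x) (Set.Icc (0:ℝ) 1) := continuousOn_id.sub hcont
  have hle : ∀ p ∈ Set.Icc (0:ℝ) 1, w p ≤ p := by
    obtain ⟨p0, hp0, hmax⟩ := isCompact_Icc.exists_isMaxOn (Set.nonempty_Icc.2 zero_le_one) hfc
    have hmax' : ∀ x ∈ Set.Icc (0:ℝ) 1, w x - x ≤ w p0 - p0 := isMaxOn_iff.mp hmax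
    have hkey : w p0 - p0 ≤ 0 := by
      rcases eq_or_lt_of_le hp0.1 with h | h
      · rw [← h]; simp [h0]
      rcases eq_or_lt_of_le hp0.2 with h' | h'
      · rw [h']; simp [h1]
      set t := min p0 (1 - p0) with htdef
      have ht : 0 < t := lt_min h (by linarith)
      have ht1 : t ≤ p0 := min_le_left _ _
      have ht2 : t ≤ 1 - p0 := min_le_right _ _
      have hm := hmid (p0 - t) (p0 + t) (by linarith) (by linarith) (by linarith)
      have e : (p0 - t + (p0 + t))/2 = p0 := by ring
      rw [e] at hm
      have hx1 := hmax' (p0 - t) ⟨by linarith, by linarith⟩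
      have hx2 := hmax' (p0 + t) ⟨by linarith, by linarith⟩
      rcases min_cases p0 (1 - p0) with ⟨hmin, _⟩ | ⟨hmin, _⟩
      · have hz : p0 - t = 0 := by rw [htdef, hmin]; ring
        rw [hz, h0] at hm hx1
        linarith
      · have hz : p0 + t = 1 := by rw [htdef, hmin]; ring
        rw [hz, h1] at hm hx2
        linarith
    intro p hp
    have := hmax' p hp
    linarith
  have hge : ∀ p ∈ Set.Icc (0:ℝ) 1, p ≤ w p := by
    obtain ⟨p0, hp0, hmax⟩ := isCompact_Icc.exists_isMaxOn (Set.nonempty_Icc.2 zero_le_one) hgc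
    have hmax' : ∀ x ∈ Set.Icc (0:ℝ) 1, x - w x ≤ p0 - w p0 := isMaxOn_iff.mp hmax
    have hkey : p0 - w p0 ≤ 0 := by
      rcases eq_or_lt_of_le hp0.1 with h | h
      · rw [← h]; simp [h0]
      rcases eq_or_lt_of_le hp0.2 with h' | h'
      · rw [h']; simp [h1]
      set t := min p0 (1 - p0) with htdef
      have ht : 0 < t := lt_min h (by linarith)
      have ht1 : t ≤ p0 := min_le_left _ _
      have ht2 : t ≤ 1 - p0 := min_le_right _ _
      have hm := hmid (p0 - t) (p0 + t) (by linarith) (by linarith) (by linarith)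
      have e : (p0 - t + (p0 + t))/2 = p0 := by ring
      rw [e] at hm
      have hx1 := hmax' (p0 - t) ⟨by linarith, by linarith⟩
      have hx2 := hmax' (p0 + t) ⟨by linarith, by linarith⟩
      rcases min_cases p0 (1 - p0) with ⟨hmin, _⟩ | ⟨hmin, _⟩
      · have hz : p0 - t = 0 := by rw [htdef, hmin]; ring
        rw [hz, h0] at hm hx1
        linarith
      · have hz : p0 + t = 1 := by rw [htdef, hmin]; ring
        rw [hz, h1] at hm hx2
        linarith
    intro p hp
    have := hmax' p hp
    linarith
  intro p hp
  exact le_antisymm (hle p hp) (hge p hp)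
end

section
/- Let w : [0,1] → [0,1] be continuous, strictly increasing, with w(0) = 0 and w(1) = 1, satisfying the functional equation: for all 0 ≤ a₁ < c₁ < b < c₂ < a₂ ≤ 1 with (a₂ - b)(b - c₁) = (b - a₁)(c₂ - b), one has (w(a₂) - w(b))(w(b) - w(c₁)) = (w(b) - w(a₁))(w(c₂) - w(b)). Then w(1/2) = 1/2. -/
theorem stmt_1 (w : ℝ → ℝ)
    (hmap : ∀ p ∈ Set.Icc (0:ℝ) 1, w p ∈ Set.Icc (0:ℝ) 1)
    (hcont : ContinuousOn w (Set.Icc 0 1))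
    (hmono : StrictMonoOn w (Set.Icc 0 1))
    (h0 : w 0 = 0) (h1 : w 1 = 1)
    (hfe : ∀ a₁ c₁ b c₂ a₂ : ℝ, 0 ≤ a₁ → a₁ < c₁ → c₁ < b → b < c₂ → c₂ < a₂ → a₂ ≤ 1 →
      (a₂ - b) * (b - c₁) = (b - a₁) * (c₂ - b) →
      (w a₂ - w b) * (w b - w c₁) = (w b - w a₁) * (w c₂ - w b)) :
    w (1/2) = 1/2 := by
  have e1 := hfe 0 (1/4) (1/2) (3/4) 1 (by norm_num) (by norm_num) (by norm_num)
    (by norm_num) (by norm_num) (by norm_num) (by norm_num)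
  have e2 := hfe 0 (1/4) (1/3) (1/2) 1 (by norm_num) (by norm_num) (by norm_num)
    (by norm_num) (by norm_num) (by norm_num) (by norm_num)
  have e3 := hfe 0 (1/3) (1/2) (2/3) 1 (by norm_num) (by norm_num) (by norm_num)
    (by norm_num) (by norm_num) (by norm_num) (by norm_num)
  have e4 := hfe 0 (1/2) (2/3) (3/4) 1 (by norm_num) (by norm_num) (by norm_num)
    (by norm_num) (by norm_num) (by norm_num) (by norm_num)
  rw [h0, h1] at e1 e2 e3 e4
  set A := w (1/4) with hA
  set B := w (1/3) with hB
  set C := w (1/2) with hC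
  set D := w (2/3) with hD
  -- basic inequalities from strict monotonicity
  have m13 : (1/3 : ℝ) ∈ Set.Icc (0:ℝ) 1 := by norm_num
  have m12 : (1/2 : ℝ) ∈ Set.Icc (0:ℝ) 1 := by norm_num
  have m0 : (0 : ℝ) ∈ Set.Icc (0:ℝ) 1 := by norm_num
  have m1 : (1 : ℝ) ∈ Set.Icc (0:ℝ) 1 := by norm_num
  have hBpos : 0 < B := by
    have := hmono m0 m13 (by norm_num)
    rwa [h0] at this
  have hC1 : C < 1 := by
    have := hmono m12 m1 (by norm_num)
    rwa [h1] at this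
  have hBC : B < C := hmono m13 m12 (by norm_num)
  -- rearranged equations
  have h1' : C * (w (3/4)) = C - A * (1 - C) := by linear_combination -e1
  have h2' : A * (1 - B) = B * (1 - C) := by linear_combination -e2
  have h3' : C * D = C - B * (1 - C) := by linear_combination -e3
  have h4' : D * (w (3/4)) = D - C + C * D := by linear_combination -e4
  have hkey : C^2 * (1 - D) * (1 - B) = B * D * (1 - C)^2 := by
    linear_combination (C*(1-B))*h4' - (D*(1-B))*h1' + (D*(1-C))*h2'
  have h5 : C * (1 - D) = B * (1 - C) := by linear_combination -h3'
  have hBC1 : B * (1 - C) ≠ 0 := ne_of_gt (mul_pos hBpos (by linarith))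
  have h6 : C * (1 - B) = D * (1 - C) := by
    apply mul_right_cancel₀ hBC1
    linear_combination hkey - (C*(1-B))*h5
  have h7 : (2*C - 1) * (C - B) = 0 := by linear_combination C*h6 + (1-C)*h3'
  rcases mul_eq_zero.mp h7 with h | h
  · linarith
  · linarith
end

section
/- Let Δ^{m-1} and Δ^{n-1} be standard simplices and f : Δ^{m-1} × Δ^{n-1} → ℝ be jointly continuous. Define g(x,y) := sup { E_{X∼p}[f(X,y)] : p a Borel probability measure on Δ^{m-1} with E_{X∼p}[X] = x }. Then g is upper semi-continuous on Δ^{m-1} × Δ^{n-1}. -/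
/-!
For a probability measure `p` on the simplex, the pair `(E_p[X], E_p[f(X, y)])` ranges exactly
over the convex hull of the graph of `f(·, y)`: integrals of a continuous map stay in the closed
convex hull of its range, and conversely, by Carathéodory, every point of that hull is the integral
against a measure with at most `d + 1` atoms, `d` the dimension. Hence `g(x, y)` is the largest `v`
with `(x, v)` in the hull of the graph at `y`. Parametrising the hull by `d + 1` weights and atoms,
with `y` as an extra parameter, exhibits `{(x, y, v) | (x, v) ∈ hull at y}` as a continuous image
of a compact space, and the supremum over the fibres of a compact set is upper semicontinuous.
-/

open MeasureTheory Set

theorem convexHull_range_eq_range_sum_stdSimplex {Z E : Type*} [AddCommGroup E] [Module ℝ E]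
    [FiniteDimensional ℝ E] (g : Z → E) :
    convexHull ℝ (range g) = range fun q : stdSimplex ℝ (Fin (Module.finrank ℝ E + 1)) ×
      (Fin (Module.finrank ℝ E + 1) → Z) => ∑ i, (q.1 : Fin _ → ℝ) i • g (q.2 i) := by
  refine Subset.antisymm (fun c hc => ?_) ?_
  · obtain ⟨ι, _, p, w, hpg, hp, hw0, hw1, hwp⟩ := eq_pos_convex_span_of_mem_convexHull hc
    have hcard : Fintype.card ι ≤ Fintype.card (Fin (Module.finrank ℝ E + 1)) := by
      simpa using hp.card_le_finrank_succ.trans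
        (Nat.succ_le_succ (Submodule.finrank_le _))
    obtain ⟨e⟩ := Function.Embedding.nonempty_of_card_le hcard
    choose ζ hζ using fun i => hpg (mem_range_self i)
    have : Nonempty ι := by
      by_contra h
      simp [not_nonempty_iff.mp h] at hw1
    let w' := Function.extend e w 0
    let ζ' := Function.extend e ζ fun _ => ζ (Classical.arbitrary ι)
    have hw' : ∀ j ∉ range e, w' j = 0 := fun j hj =>
      Function.extend_apply' _ _ _ (by simpa using hj)
    refine ⟨(⟨w', fun j => ?_, ?_⟩, ζ'), ?_⟩
    · by_cases hj : j ∈ range e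
      · obtain ⟨i, rfl⟩ := hj
        simpa [w', e.injective.extend_apply] using (hw0 i).le
      · rw [hw' j hj]
    · rw [← hw1]
      exact (Fintype.sum_of_injective e e.injective _ _ hw' fun i =>
        (e.injective.extend_apply _ _ i).symm).symm
    · rw [← hwp]
      refine (Fintype.sum_of_injective e e.injective _ _ (fun j hj => ?_) fun i => ?_).symm
      · change w' j • _ = 0
        rw [hw' j hj, zero_smul]
      · change _ = w' (e i) • g (ζ' (e i))
        simp only [w', ζ', e.injective.extend_apply, hζ]
  · rintro _ ⟨⟨w, z⟩, rfl⟩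
    exact (convex_convexHull ℝ _).sum_mem (fun i _ => w.2.1 i) w.2.2
      fun i _ => subset_convexHull ℝ _ (mem_range_self _)

section

variable {Z : Type*} [MeasurableSpace Z]

theorem isProbabilityMeasure_sum_smul_dirac {ι : Type*} [Fintype ι] {w : ι → ℝ}
    (hw : w ∈ stdSimplex ℝ ι) (z : ι → Z) :
    IsProbabilityMeasure (∑ i, ENNReal.ofReal (w i) • Measure.dirac (z i)) := by
  constructor
  simp [← ENNReal.ofReal_sum_of_nonneg fun i _ => hw.1 i, hw.2]

theorem integral_sum_smul_dirac {ι : Type*} [Fintype ι] {E : Type*} [NormedAddCommGroup E]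
    [NormedSpace ℝ E] [CompleteSpace E] {w : ι → ℝ} (hw : ∀ i, 0 ≤ w i) (z : ι → Z) {G : Z → E}
    (hG : StronglyMeasurable G) :
    ∫ x, G x ∂(∑ i, ENNReal.ofReal (w i) • Measure.dirac (z i)) = ∑ i, w i • G (z i) := by
  rw [integral_finsetSum_measure fun i _ =>
    (integrable_dirac' hG enorm_lt_top).smul_measure ENNReal.ofReal_ne_top]
  simp [integral_smul_measure, integral_dirac' G _ hG, hw]

end

section

variable {Z E : Type*} [TopologicalSpace Z] [CompactSpace Z]
  [NormedAddCommGroup E] [NormedSpace ℝ E] [FiniteDimensional ℝ E]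

theorem isCompact_convexHull_range {g : Z → E} (hg : Continuous g) :
    IsCompact (convexHull ℝ (range g)) := by
  rw [convexHull_range_eq_range_sum_stdSimplex]
  refine isCompact_range (continuous_finsetSum _ fun i _ => .smul ?_ (by fun_prop))
  exact (continuous_apply i).comp (continuous_subtype_val.comp continuous_fst)

theorem isCompact_setOf_mem_convexHull_range {Y : Type*} [TopologicalSpace Y] [CompactSpace Y]
    {F : Z × Y → E} (hF : Continuous F) :
    IsCompact {q : Y × E | q.2 ∈ convexHull ℝ (range fun z => F (z, q.1))} := by
  have : {q : Y × E | q.2 ∈ convexHull ℝ (range fun z => F (z, q.1))} =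
      range fun r : stdSimplex ℝ (Fin (Module.finrank ℝ E + 1)) ×
        (Fin (Module.finrank ℝ E + 1) → Z) × Y =>
        (r.2.2, ∑ i, (r.1 : Fin _ → ℝ) i • F (r.2.1 i, r.2.2)) := by
    ext ⟨y, c⟩
    simp [convexHull_range_eq_range_sum_stdSimplex]
  rw [this]
  refine isCompact_range (.prodMk (by fun_prop)
    (continuous_finsetSum _ fun i _ => .smul ?_ (by fun_prop)))
  exact (continuous_apply i).comp (continuous_subtype_val.comp continuous_fst)

variable [MeasurableSpace Z] [OpensMeasurableSpace Z]

theorem range_integral_probabilityMeasure_eq_convexHull {G : Z → E} (hG : Continuous G) :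
    range (fun p : ProbabilityMeasure Z => ∫ z, G z ∂(p : Measure Z)) =
      convexHull ℝ (range G) := by
  refine Subset.antisymm ?_ fun c hc => ?_
  · rintro _ ⟨p, rfl⟩
    exact (convex_convexHull ℝ _).integral_mem (isCompact_convexHull_range hG).isClosed
      (.of_forall fun z => subset_convexHull ℝ _ (mem_range_self z))
      (hG.integrable_of_hasCompactSupport (.of_compactSpace G))
  · rw [convexHull_range_eq_range_sum_stdSimplex] at hc
    obtain ⟨⟨w, z⟩, rfl⟩ := hc
    have := isProbabilityMeasure_sum_smul_dirac w.2 z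
    exact ⟨⟨_, this⟩, integral_sum_smul_dirac w.2.1 z hG.stronglyMeasurable⟩

theorem exists_probabilityMeasure_integrals_eq_iff_mem_convexHull {e : Z → E}
    (he : Continuous e) {g : Z → ℝ} (hg : Continuous g) (x : E) (v : ℝ) :
    (∃ p : ProbabilityMeasure Z, ∫ z, e z ∂(p : Measure Z) = x ∧ v = ∫ z, g z ∂(p : Measure Z)) ↔
      (x, v) ∈ convexHull ℝ (range fun z => (e z, g z)) := by
  rw [← range_integral_probabilityMeasure_eq_convexHull (he.prodMk hg)]
  refine exists_congr fun p => ?_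
  dsimp only
  rw [integral_pair (he.integrable_of_hasCompactSupport (.of_compactSpace _))
    (hg.integrable_of_hasCompactSupport (.of_compactSpace _)), Prod.ext_iff, eq_comm (a := v)]

end

theorem upperSemicontinuous_sSup_of_isCompact {X : Type*} [TopologicalSpace X] [T2Space X]
    {S : Set (X × ℝ)} (hS : IsCompact S) (hne : ∀ x, ∃ v, (x, v) ∈ S) :
    UpperSemicontinuous fun x => sSup {v | (x, v) ∈ S} := by
  rw [upperSemicontinuous_iff_isClosed_preimage]
  intro a
  suffices (fun x => sSup {v | (x, v) ∈ S}) ⁻¹' Ici a = Prod.fst '' (S ∩ {p | a ≤ p.2}) by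
    rw [this]
    exact ((hS.inter_right (isClosed_le continuous_const continuous_snd)).image
      continuous_fst).isClosed
  ext x
  have hfib : IsCompact {v | (x, v) ∈ S} :=
    (hS.image continuous_snd).of_isClosed_subset (hS.isClosed.preimage (by fun_prop))
      fun v hv => ⟨_, hv, rfl⟩
  constructor
  · intro ha
    exact ⟨(x, _), ⟨hfib.sSup_mem (hne x), ha⟩, rfl⟩
  · rintro ⟨⟨x, v⟩, ⟨hv, hav⟩, rfl⟩
    exact hav.trans (le_csSup hfib.bddAbove hv)

theorem upperSemicontinuous_sSup_integral_of_barycenter_eq {Z Y E : Type*}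
    [TopologicalSpace Z] [CompactSpace Z] [T2Space Z] [MeasurableSpace Z] [OpensMeasurableSpace Z]
    [TopologicalSpace Y] [CompactSpace Y] [T2Space Y]
    [NormedAddCommGroup E] [NormedSpace ℝ E] [FiniteDimensional ℝ E]
    {e : Z → E} (he : Continuous e) {f : Z × Y → ℝ} (hf : Continuous f) :
    UpperSemicontinuous fun xy : Z × Y => sSup {v : ℝ | ∃ p : ProbabilityMeasure Z,
      ∫ z, e z ∂(p : Measure Z) = e xy.1 ∧ v = ∫ z, f (z, xy.2) ∂(p : Measure Z)} := by
  have hC : IsCompact {q : (Z × Y) × (E × ℝ) |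
      q.2 ∈ convexHull ℝ (range fun z => (e z, f (z, q.1.2)))} :=
    isCompact_setOf_mem_convexHull_range (F := fun r : Z × (Z × Y) => (e r.1, f (r.1, r.2.2)))
      (by fun_prop)
  have hS : IsCompact {p : (Z × Y) × ℝ |
      (e p.1.1, p.2) ∈ convexHull ℝ (range fun z => (e z, f (z, p.1.2)))} :=
    (isCompact_univ.prod (hC.image (by fun_prop : Continuous fun q => q.2.2))).of_isClosed_subset
      (hC.isClosed.preimage (by fun_prop : Continuous fun p : (Z × Y) × ℝ => (p.1, (e p.1.1, p.2))))
      fun p hp => ⟨trivial, (p.1, (e p.1.1, p.2)), hp, rfl⟩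
  convert upperSemicontinuous_sSup_of_isCompact hS fun xy =>
    ⟨f xy, subset_convexHull ℝ _ ⟨xy.1, rfl⟩⟩ using 3 with xy v
  ext v
  exact exists_probabilityMeasure_integrals_eq_iff_mem_convexHull he (by fun_prop) _ _

theorem stmt_11 (m n : ℕ)
    (f : ↥(stdSimplex ℝ (Fin m)) × ↥(stdSimplex ℝ (Fin n)) → ℝ)
    (hf : Continuous f) :
    UpperSemicontinuous (fun xy : ↥(stdSimplex ℝ (Fin m)) × ↥(stdSimplex ℝ (Fin n)) =>
      sSup {rr : ℝ | ∃ p : ProbabilityMeasure ↥(stdSimplex ℝ (Fin m)),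
        (∫ z, (z : Fin m → ℝ) ∂(p : Measure ↥(stdSimplex ℝ (Fin m)))) = (xy.1 : Fin m → ℝ) ∧
        rr = ∫ z, f (z, xy.2) ∂(p : Measure ↥(stdSimplex ℝ (Fin m)))}) :=
  upperSemicontinuous_sSup_integral_of_barycenter_eq continuous_subtype_val hf
end

section
/- Let Δ^{m-1}, Δ^{n-1} be standard simplices and f : Δ^{m-1} × Δ^{n-1} → ℝ jointly continuous. Define g(x,y) := sup { E_{X∼p}[f(X,y)] : p Borel probability measure on Δ^{m-1}, barycenter of p equals x }. Then g is jointly continuous on Δ^{m-1} × Δ^{n-1}. In particular, for each fixed y, g(·,y) is the concave hull of f(·,y) and is continuous on the simplex. -/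
/-!
The envelope is the supremum of the functional `(p, y) ↦ ∫ f (·, y) dp`, jointly continuous on
the compact space of probability measures times the parameter space, over the fibres of the
continuous barycenter map. Upper semicontinuity is then a compactness argument: the pairs at
which the functional is at least `s` form a closed set, whose projection along the compact factor
stays closed. For lower semicontinuity, every point `x'` of the simplex close to `x` is a
combination `(1 - t) x + t v` with `v` in the simplex and `t → 0` as `x' → x`; mixing a
near-optimal measure for `x` with the Dirac mass at `v` in the proportion `t` yields a measure with
barycenter `x'` and almost the same value.
-/

open MeasureTheory Set Filter Topology

section ConvexCombination

variable {X E : Type*} [MeasurableSpace X] [NormedAddCommGroup E] [NormedSpace ℝ E]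
  {μ ν : Measure X} {t : ℝ}

lemma isProbabilityMeasure_convexComb [IsProbabilityMeasure μ] [IsProbabilityMeasure ν]
    (ht₀ : 0 ≤ t) (ht₁ : t ≤ 1) :
    IsProbabilityMeasure (ENNReal.ofReal (1 - t) • μ + ENNReal.ofReal t • ν) := by
  constructor
  simp only [Measure.coe_add, Measure.coe_smul, Pi.add_apply, Pi.smul_apply, measure_univ,
    smul_eq_mul, mul_one]
  rw [← ENNReal.ofReal_add (by linarith) ht₀, sub_add_cancel, ENNReal.ofReal_one]

lemma integral_convexComb_dirac [TopologicalSpace X] [CompactSpace X] [OpensMeasurableSpace X]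
    [MeasurableSingletonClass X] [CompleteSpace E] [IsFiniteMeasure μ] {φ : X → E}
    (hφ : Continuous φ) (v : X) (ht₀ : 0 ≤ t) (ht₁ : t ≤ 1) :
    ∫ x, φ x ∂(ENNReal.ofReal (1 - t) • μ + ENNReal.ofReal t • Measure.dirac v) =
      (1 - t) • ∫ x, φ x ∂μ + t • φ v := by
  have hint : ∀ (ν : Measure X) [IsFiniteMeasure ν], Integrable φ ν :=
    fun _ _ => hφ.integrable_of_hasCompactSupport (.of_compactSpace _)
  rw [integral_add_measure ((hint μ).smul_measure ENNReal.ofReal_ne_top)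
      ((hint _).smul_measure ENNReal.ofReal_ne_top), integral_smul_measure, integral_smul_measure,
    integral_dirac, ENNReal.toReal_ofReal ht₀, ENNReal.toReal_ofReal (by linarith)]

end ConvexCombination

namespace MeasureTheory.ProbabilityMeasure

variable {X : Type*} [TopologicalSpace X] [CompactSpace X] [MeasurableSpace X]
  [OpensMeasurableSpace X]

lemma dist_integral_le (φ ψ : C(X, ℝ)) (p : ProbabilityMeasure X) :
    dist (∫ x, φ x ∂(p : Measure X)) (∫ x, ψ x ∂(p : Measure X)) ≤ dist φ ψ := by
  rw [dist_eq_norm, dist_eq_norm, ← integral_sub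
    (φ.continuous.integrable_of_hasCompactSupport (.of_compactSpace _))
    (ψ.continuous.integrable_of_hasCompactSupport (.of_compactSpace _))]
  simpa using norm_integral_le_of_norm_le_const (μ := (p : Measure X))
    (Eventually.of_forall fun x => (φ - ψ).norm_coe_le_norm x)

lemma continuous_integral_continuousMap_prod :
    Continuous fun q : C(X, ℝ) × ProbabilityMeasure X => ∫ x, q.1 x ∂(q.2 : Measure X) := by
  refine continuous_iff_continuousAt.2 fun ⟨φ, p⟩ => ?_
  have hφ : Continuous fun q : C(X, ℝ) × ProbabilityMeasure X => ∫ x, φ x ∂(q.2 : Measure X) :=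
    (continuous_integral_continuousMap φ).comp continuous_snd
  refine tendsto_of_tendsto_of_dist (hφ.tendsto (φ, p)) (squeeze_zero (fun _ => dist_nonneg)
    (fun q => (dist_integral_le φ q.1 q.2)) ?_)
  simpa using (tendsto_const_nhds (x := φ)).dist (continuous_fst.tendsto (φ, p))

lemma continuous_integral_of_continuous_prod {Y : Type*} [TopologicalSpace Y] {f : X × Y → ℝ}
    (hf : Continuous f) :
    Continuous fun q : ProbabilityMeasure X × Y => ∫ x, f (x, q.2) ∂(q.1 : Measure X) := by
  let F : C(Y, C(X, ℝ)) := ContinuousMap.curry ⟨fun yx => f (yx.2, yx.1), by fun_prop⟩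
  exact continuous_integral_continuousMap_prod.comp
    ((F.continuous.comp continuous_snd).prodMk continuous_fst)

end MeasureTheory.ProbabilityMeasure

theorem bddAbove_setOf_exists_eq {P : Type*} [TopologicalSpace P] [CompactSpace P] (R : P → Prop)
    {Φ : P → ℝ} (hΦ : Continuous Φ) : BddAbove {r | ∃ p, R p ∧ r = Φ p} :=
  (isCompact_range hΦ).bddAbove.mono (by rintro _ ⟨p, -, rfl⟩; exact ⟨p, rfl⟩)

theorem upperSemicontinuous_sSup_of_isClosed {P X : Type*} [TopologicalSpace P] [CompactSpace P]
    [TopologicalSpace X] {R : P → X → Prop} (hR : IsClosed {q : P × X | R q.1 q.2})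
    (hne : ∀ x, ∃ p, R p x) {Φ : P → X → ℝ} (hΦ : Continuous (Function.uncurry Φ)) :
    UpperSemicontinuous fun x => sSup {r | ∃ p, R p x ∧ r = Φ p x} := by
  intro x t ht
  obtain ⟨s, hxs, hst⟩ := exists_between ht
  have hbdd := bddAbove_setOf_exists_eq (R · x) (hΦ.comp (Continuous.prodMk_left x))
  let A := {q : P × X | R q.1 q.2 ∧ s ≤ Φ q.1 q.2}
  have hA : IsClosed (Prod.snd '' A) :=
    isClosedMap_snd_of_compactSpace _ (hR.inter (isClosed_le continuous_const hΦ))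
  have hxA : x ∉ Prod.snd '' A := by
    rintro ⟨⟨p, x⟩, ⟨hp, hsp⟩, rfl⟩
    exact hxs.not_ge (hsp.trans (le_csSup hbdd ⟨p, hp, rfl⟩))
  filter_upwards [hA.isOpen_compl.mem_nhds hxA] with x' hx'
  obtain ⟨p₀, hp₀⟩ := hne x'
  refine (csSup_le ?_ ?_).trans_lt hst
  · exact ⟨_, p₀, hp₀, rfl⟩
  · rintro _ ⟨p, hp, rfl⟩
    exact not_lt.1 fun h => hx' ⟨(p, x'), ⟨hp, h.le⟩, rfl⟩

namespace stdSimplex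

variable {ι : Type*} [Fintype ι]

lemma add_smul_sub_mem {x x' : ι → ℝ} (hx : x ∈ stdSimplex ℝ ι) (hx' : x' ∈ stdSimplex ℝ ι)
    {δ : ℝ} (hδ : 0 ≤ δ) (hδx : ∀ i, 0 < x i → δ ≤ x i) :
    x + (δ / dist x' x) • (x' - x) ∈ stdSimplex ℝ ι := by
  refine ⟨fun i => ?_, ?_⟩
  · simp only [Pi.add_apply, Pi.smul_apply, Pi.sub_apply, smul_eq_mul]
    rcases (hx.1 i).eq_or_lt with hxi | hxi
    · rw [← hxi, sub_zero, zero_add]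
      exact mul_nonneg (div_nonneg hδ dist_nonneg) (hx'.1 i)
    · have hcoord : |x' i - x i| ≤ dist x' x := by
        rw [← Real.dist_eq]
        exact dist_le_pi_dist x' x i
      have hscaled : δ / dist x' x * dist x' x ≤ δ := by
        rcases eq_or_ne (dist x' x) 0 with h | h
        · simpa [h] using hδ
        · rw [div_mul_cancel₀ _ h]
      have hc : 0 ≤ δ / dist x' x := div_nonneg hδ dist_nonneg
      nlinarith [neg_abs_le (x' i - x i), hδx i hxi]
  · simp [Finset.sum_add_distrib, ← Finset.mul_sum, Finset.sum_sub_distrib, hx.2, hx'.2]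

lemma eventually_exists_eq_convexComb {x : ι → ℝ} (hx : x ∈ stdSimplex ℝ ι) {S : Set ℝ}
    (hS : S ∈ 𝓝 0) :
    ∀ᶠ x' in 𝓝[stdSimplex ℝ ι] x,
      ∃ t ∈ S ∩ Icc 0 1, ∃ v ∈ stdSimplex ℝ ι, x' = (1 - t) • x + t • v := by
  obtain ⟨δ, hδx, hδ⟩ : ∃ δ, (∀ i, 0 < x i → δ ≤ x i) ∧ 0 < δ := by
    refine ((eventually_all.2 fun i => ?_).and self_mem_nhdsWithin).exists (f := 𝓝[>] (0 : ℝ))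
    by_cases hxi : 0 < x i
    · exact nhdsWithin_le_nhds ((eventually_le_nhds hxi).mono fun _ h _ => h)
    · exact Eventually.of_forall fun _ h => absurd h hxi
  obtain ⟨ε, hε, hεS⟩ := Metric.mem_nhds_iff.1 hS
  filter_upwards [self_mem_nhdsWithin, mem_nhdsWithin_of_mem_nhds
    (Metric.ball_mem_nhds x (mul_pos hδ (lt_min hε one_pos)))] with x' hx' hdist
  have ht : dist x' x / δ < min ε 1 := by
    rw [div_lt_iff₀ hδ, mul_comm]
    exact hdist
  have ht₀ : 0 ≤ dist x' x / δ := div_nonneg dist_nonneg hδ.le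
  refine ⟨dist x' x / δ, ⟨hεS ?_, ht₀, ht.le.trans (min_le_right _ _)⟩, _,
    add_smul_sub_mem hx hx' hδ.le hδx, ?_⟩
  · rw [Metric.mem_ball, dist_zero_right, Real.norm_of_nonneg ht₀]
    exact ht.trans_le (min_le_left _ _)
  · rcases eq_or_ne (dist x' x) 0 with h | h
    · simp [dist_eq_zero.1 h]
    · have : dist x' x / δ * (δ / dist x' x) = 1 := by field_simp
      rw [smul_add, smul_smul, this, one_smul]
      module

end stdSimplex

section ConcaveEnvelope

variable {ι Y : Type*} [Fintype ι] [TopologicalSpace Y]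

noncomputable def barycenter (p : ProbabilityMeasure (stdSimplex ℝ ι)) : ι → ℝ :=
  ∫ z, (z : ι → ℝ) ∂(p : Measure (stdSimplex ℝ ι))

lemma continuous_barycenter : Continuous (barycenter (ι := ι)) := by
  refine continuous_pi fun i => ?_
  have hint : ∀ (p : ProbabilityMeasure (stdSimplex ℝ ι)) (j : ι),
      Integrable (fun z : stdSimplex ℝ ι => (z : ι → ℝ) j) (p : Measure (stdSimplex ℝ ι)) :=
    fun p j => ((continuous_apply j).comp continuous_subtype_val).integrable_of_hasCompactSupport
      (.of_compactSpace _)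
  simp only [barycenter, eval_integral (hint _)]
  exact ProbabilityMeasure.continuous_integral_continuousMap
    (⟨fun z => (z : ι → ℝ) i, (continuous_apply i).comp continuous_subtype_val⟩ :
      C(stdSimplex ℝ ι, ℝ))

lemma barycenter_dirac (x : stdSimplex ℝ ι) :
    barycenter ⟨Measure.dirac x, inferInstance⟩ = x :=
  integral_dirac _ x

noncomputable def concaveEnvelope (f : stdSimplex ℝ ι × Y → ℝ) (xy : stdSimplex ℝ ι × Y) : ℝ :=
  sSup {r | ∃ p : ProbabilityMeasure (stdSimplex ℝ ι),
    barycenter p = xy.1 ∧ r = ∫ z, f (z, xy.2) ∂(p : Measure (stdSimplex ℝ ι))}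

lemma upperSemicontinuous_concaveEnvelope {f : stdSimplex ℝ ι × Y → ℝ} (hf : Continuous f) :
    UpperSemicontinuous (concaveEnvelope f) := by
  unfold concaveEnvelope
  exact upperSemicontinuous_sSup_of_isClosed
    (R := fun (p : ProbabilityMeasure (stdSimplex ℝ ι)) (xy : stdSimplex ℝ ι × Y) =>
      barycenter p = xy.1)
    (Φ := fun (p : ProbabilityMeasure (stdSimplex ℝ ι)) (xy : stdSimplex ℝ ι × Y) =>
      ∫ z, f (z, xy.2) ∂(p : Measure (stdSimplex ℝ ι)))
    (isClosed_eq (continuous_barycenter.comp continuous_fst)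
      (continuous_subtype_val.comp (continuous_fst.comp continuous_snd)))
    (fun xy => ⟨_, barycenter_dirac xy.1⟩)
    (by exact (ProbabilityMeasure.continuous_integral_of_continuous_prod hf).comp
          (continuous_fst.prodMk (continuous_snd.comp continuous_snd)))

lemma lowerSemicontinuous_concaveEnvelope {f : stdSimplex ℝ ι × Y → ℝ} (hf : Continuous f) :
    LowerSemicontinuous (concaveEnvelope f) := by
  have hΦ := ProbabilityMeasure.continuous_integral_of_continuous_prod hf
  unfold concaveEnvelope
  rintro ⟨x, y⟩ t ht
  obtain ⟨_, ⟨p, hpx, rfl⟩, htp⟩ :=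
    exists_lt_of_lt_csSup (by exact ⟨_, _, barycenter_dirac x, rfl⟩) ht
  have hmix : ∀ᶠ sy : ℝ × Y in 𝓝 (0, y), ∀ v ∈ (univ : Set (stdSimplex ℝ ι)),
      t < (1 - sy.1) * ∫ z, f (z, sy.2) ∂(p : Measure _) + sy.1 * f (v, sy.2) := by
    refine isCompact_univ.eventually_forall_of_forall_eventually fun v _ => ?_
    have hcont : Continuous fun q : (ℝ × Y) × stdSimplex ℝ ι =>
        (1 - q.1.1) * ∫ z, f (z, q.1.2) ∂(p : Measure _) + q.1.1 * f (q.2, q.1.2) := by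
      have : Continuous fun q : (ℝ × Y) × stdSimplex ℝ ι => ∫ z, f (z, q.1.2) ∂(p : Measure _) :=
        hΦ.comp (continuous_const.prodMk (continuous_snd.comp continuous_fst))
      fun_prop
    exact hcont.continuousAt.eventually (lt_mem_nhds (by simpa using htp))
  rw [nhds_prod_eq] at hmix
  obtain ⟨small, hsmall, near, hnear, hgood⟩ := eventually_prod_iff.1 hmix
  have hstar := stdSimplex.eventually_exists_eq_convexComb x.2 hsmall
  rw [← map_nhds_subtype_val] at hstar
  filter_upwards [(eventually_map.1 hstar).prod_nhds hnear]
  rintro ⟨x', y'⟩ ⟨⟨s, ⟨hs, hs₀, hs₁⟩, v, hv, hx'⟩, hy'⟩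
  set μ : Measure (stdSimplex ℝ ι) :=
    ENNReal.ofReal (1 - s) • (p : Measure _) + ENNReal.ofReal s • Measure.dirac ⟨v, hv⟩ with hμ
  let q : ProbabilityMeasure (stdSimplex ℝ ι) := ⟨μ, isProbabilityMeasure_convexComb hs₀ hs₁⟩
  refine lt_csSup_of_lt (bddAbove_setOf_exists_eq _ (hΦ.comp (Continuous.prodMk_left y')))
    ⟨q, ?_, rfl⟩ ?_
  · change ∫ z, (z : ι → ℝ) ∂μ = (x' : ι → ℝ)
    rw [hμ, integral_convexComb_dirac (φ := fun z : stdSimplex ℝ ι => (z : ι → ℝ))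
      continuous_subtype_val _ hs₀ hs₁, ← barycenter, hpx]
    exact hx'.symm
  · change t < ∫ z, f (z, y') ∂μ
    simpa only [hμ, integral_convexComb_dirac (φ := fun z => f (z, y'))
      (hf.comp (Continuous.prodMk_left y')) _ hs₀ hs₁, smul_eq_mul] using
      hgood hs hy' ⟨v, hv⟩ (mem_univ _)

end ConcaveEnvelope

theorem stmt_12 (m n : ℕ)
    (f : ↥(stdSimplex ℝ (Fin m)) × ↥(stdSimplex ℝ (Fin n)) → ℝ)
    (hf : Continuous f) :
    Continuous (fun xy : ↥(stdSimplex ℝ (Fin m)) × ↥(stdSimplex ℝ (Fin n)) =>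
      sSup {rr : ℝ | ∃ p : ProbabilityMeasure ↥(stdSimplex ℝ (Fin m)),
        (∫ z, (z : Fin m → ℝ) ∂(p : Measure ↥(stdSimplex ℝ (Fin m)))) = (xy.1 : Fin m → ℝ) ∧
        rr = ∫ z, f (z, xy.2) ∂(p : Measure ↥(stdSimplex ℝ (Fin m)))}) :=
  continuous_iff_lower_upperSemicontinuous.2
    ⟨lowerSemicontinuous_concaveEnvelope hf, upperSemicontinuous_concaveEnvelope hf⟩
end

section
/- Let r = 0, v(x) = x^{0.8} for x ≥ 0, and w⁺(p) = exp(-(-ln p)^{0.6}) for p ∈ (0,1], w⁺(0) = 0. For the lotteries L₁ = {(0.34, 20000); (0.66, 0)}, L₂ = {(0.17, 30000); (0.83, 0)}, and L = (16/17)L₁ + (1/17)L₂ = {(0.01, 30000); (0.32, 20000); (0.67, 0)}, the CPT values satisfy V(L₂) < V(L₁) < V(L). In particular, betweenness fails: the mixture L of L₁ and L₂ is strictly preferred to both. -/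
/-- If `E_ub^a < r^b` then `exp(a/b) < r`. -/
lemma exp_div_lt' {a b : ℕ} {r : ℝ} (hb : 0 < b) (hr : 0 ≤ r)
    (h : (2.7182818286 : ℝ) ^ a < r ^ b) : Real.exp ((a : ℝ) / b) < r := by
  have hpow : Real.exp ((a : ℝ) / b) ^ b = Real.exp a := by
    rw [← Real.exp_nat_mul]
    congr 1
    field_simp
  have he : Real.exp (a : ℝ) = Real.exp 1 ^ a := by
    rw [← Real.exp_nat_mul]; ring_nf
  have h1 : Real.exp 1 ^ a ≤ (2.7182818286 : ℝ) ^ a :=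
    pow_le_pow_left₀ (Real.exp_pos 1).le Real.exp_one_lt_d9.le a
  refine lt_of_pow_lt_pow_left₀ b hr ?_
  rw [hpow, he]
  exact lt_of_le_of_lt h1 h

/-- If `r^b < E_lb^a` then `r < exp(a/b)`. -/
lemma exp_div_gt' {a b : ℕ} {r : ℝ} (hb : 0 < b)
    (h : r ^ b < (2.7182818283 : ℝ) ^ a) : r < Real.exp ((a : ℝ) / b) := by
  have hpow : Real.exp ((a : ℝ) / b) ^ b = Real.exp a := by
    rw [← Real.exp_nat_mul]
    congr 1
    field_simp
  have he : Real.exp (a : ℝ) = Real.exp 1 ^ a := by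
    rw [← Real.exp_nat_mul]; ring_nf
  have h1 : (2.7182818283 : ℝ) ^ a ≤ Real.exp 1 ^ a :=
    pow_le_pow_left₀ (by norm_num) Real.exp_one_gt_d9.le a
  refine lt_of_pow_lt_pow_left₀ b (Real.exp_pos _).le ?_
  rw [hpow, he]
  exact lt_of_lt_of_le h h1

/-- `log x < a/b` from `x^b < E_lb^a`. -/
lemma log_lt' {a b : ℕ} {x : ℝ} (hb : 0 < b) (hx : 0 < x)
    (h : x ^ b < (2.7182818283 : ℝ) ^ a) : Real.log x < (a : ℝ) / b := by
  rw [Real.log_lt_iff_lt_exp hx]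
  exact exp_div_gt' hb h

/-- `a/b < log x` from `E_ub^a < x^b`. -/
lemma log_gt' {a b : ℕ} {x : ℝ} (hb : 0 < b) (hx : 0 < x)
    (h : (2.7182818286 : ℝ) ^ a < x ^ b) : (a : ℝ) / b < Real.log x := by
  rw [Real.lt_log_iff_exp_lt hx]
  exact exp_div_lt' hb hx.le h

/-- `u^0.6 < q` from `u^3 < q^5`. -/
lemma rpow06_lt {u q : ℝ} (hu : 0 ≤ u) (hq : 0 ≤ q)
    (h : u ^ (3 : ℕ) < q ^ (5 : ℕ)) : u ^ (0.6 : ℝ) < q := by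
  have h5 : (u ^ (0.6 : ℝ)) ^ (5 : ℕ) = u ^ (3 : ℕ) := by
    rw [← Real.rpow_natCast (u ^ (0.6 : ℝ)) 5, ← Real.rpow_mul hu]
    rw [show ((0.6 : ℝ) * (5:ℕ)) = ((3 : ℕ) : ℝ) by norm_num, Real.rpow_natCast]
  refine lt_of_pow_lt_pow_left₀ 5 hq ?_
  rw [h5]; exact h

/-- `q < u^0.6` from `q^5 < u^3`. -/
lemma rpow06_gt {u q : ℝ} (hu : 0 ≤ u)
    (h : q ^ (5 : ℕ) < u ^ (3 : ℕ)) : q < u ^ (0.6 : ℝ) := by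
  have h5 : (u ^ (0.6 : ℝ)) ^ (5 : ℕ) = u ^ (3 : ℕ) := by
    rw [← Real.rpow_natCast (u ^ (0.6 : ℝ)) 5, ← Real.rpow_mul hu]
    rw [show ((0.6 : ℝ) * (5:ℕ)) = ((3 : ℕ) : ℝ) by norm_num, Real.rpow_natCast]
  refine lt_of_pow_lt_pow_left₀ 5 (by positivity) ?_
  rw [h5]; exact h

/-- `exp(-(a/b)) < r` from `(1/r)^b < E_lb^a`. -/
lemma exp_neg_lt' {a b : ℕ} {r : ℝ} (hb : 0 < b) (hr : 0 < r)
    (h : (1 / r) ^ b < (2.7182818283 : ℝ) ^ a) : Real.exp (-((a : ℝ) / b)) < r := by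
  have := exp_div_gt' hb h
  rw [Real.exp_neg]
  have hepos := Real.exp_pos ((a : ℝ) / b)
  rw [inv_lt_iff_one_lt_mul₀ hepos]
  calc (1 : ℝ) = (1 / r) * r := by field_simp
  _ < Real.exp ((a : ℝ) / b) * r := by
      exact mul_lt_mul_of_pos_right this hr
  _ = r * Real.exp ((a : ℝ) / b) := by ring

/-- `r < exp(-(a/b))` from `E_ub^a < (1/r)^b`. -/
lemma exp_neg_gt' {a b : ℕ} {r : ℝ} (hb : 0 < b) (hr : 0 < r)
    (h : (2.7182818286 : ℝ) ^ a < (1 / r) ^ b) : r < Real.exp (-((a : ℝ) / b)) := by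
  have h1 : Real.exp ((a : ℝ) / b) < 1 / r := exp_div_lt' hb (by positivity) h
  rw [Real.exp_neg]
  have hepos := Real.exp_pos ((a : ℝ) / b)
  rw [lt_inv_comm₀ hr hepos] at *
  calc Real.exp ((a : ℝ) / b) < 1 / r := h1
  _ = r⁻¹ := one_div r

theorem stmt_14 :
    let w : ℝ → ℝ := fun p => if p = 0 then 0 else Real.exp (-((-Real.log p) ^ (0.6 : ℝ)))
    let v : ℝ → ℝ := fun x => x ^ (0.8 : ℝ)
    -- V(L₂) < V(L₁) < V(L)
    w 0.17 * v 30000 < w 0.34 * v 20000 ∧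
    w 0.34 * v 20000 < w 0.01 * v 30000 + (w 0.33 - w 0.01) * v 20000 := by
  intro w v
  -- unfold w at the four points
  have hw17 : w 0.17 = Real.exp (-((Real.log (100/17)) ^ (0.6 : ℝ))) := by
    show (if (0.17:ℝ) = 0 then (0:ℝ) else _) = _
    rw [if_neg (by norm_num)]
    congr 2
    rw [← Real.log_inv]
    norm_num
  have hw34 : w 0.34 = Real.exp (-((Real.log (50/17)) ^ (0.6 : ℝ))) := by
    show (if (0.34:ℝ) = 0 then (0:ℝ) else _) = _
    rw [if_neg (by norm_num)]
    congr 2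
    rw [← Real.log_inv]
    norm_num
  have hw33 : w 0.33 = Real.exp (-((Real.log (100/33)) ^ (0.6 : ℝ))) := by
    show (if (0.33:ℝ) = 0 then (0:ℝ) else _) = _
    rw [if_neg (by norm_num)]
    congr 2
    rw [← Real.log_inv]
    norm_num
  have hw01 : w 0.01 = Real.exp (-((Real.log (100:ℝ)) ^ (0.6 : ℝ))) := by
    show (if (0.01:ℝ) = 0 then (0:ℝ) else _) = _
    rw [if_neg (by norm_num)]
    congr 2
    rw [← Real.log_inv]
    norm_num
  -- log bounds
  have hu17pos : (0:ℝ) ≤ Real.log (100/17) := Real.log_nonneg (by norm_num)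
  have hu34pos : (0:ℝ) ≤ Real.log (50/17) := Real.log_nonneg (by norm_num)
  have hu33pos : (0:ℝ) ≤ Real.log (100/33) := Real.log_nonneg (by norm_num)
  have hu01pos : (0:ℝ) ≤ Real.log (100:ℝ) := Real.log_nonneg (by norm_num)
  have hu17 : ((44:ℕ):ℝ)/((25:ℕ):ℝ) < Real.log (100/17) :=
    log_gt' (by norm_num) (by norm_num) (by norm_num)
  have hu34l : ((53:ℕ):ℝ)/((50:ℕ):ℝ) < Real.log (50/17) :=
    log_gt' (by norm_num) (by norm_num) (by norm_num)
  have hu34u : Real.log (50/17) < ((27:ℕ):ℝ)/((25:ℕ):ℝ) :=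
    log_lt' (by norm_num) (by norm_num) (by norm_num)
  have hu33 : Real.log (100/33) < ((28:ℕ):ℝ)/((25:ℕ):ℝ) :=
    log_lt' (by norm_num) (by norm_num) (by norm_num)
  have hu01 : Real.log (100:ℝ) < ((47:ℕ):ℝ)/((10:ℕ):ℝ) :=
    log_lt' (by norm_num) (by norm_num) (by norm_num)
  -- s = u^0.6 bounds
  have hs17 : ((7:ℕ):ℝ)/((5:ℕ):ℝ) < (Real.log (100/17)) ^ (0.6:ℝ) := by
    refine rpow06_gt hu17pos ?_
    calc (((7:ℕ):ℝ)/((5:ℕ):ℝ)) ^ (5:ℕ) ≤ (((44:ℕ):ℝ)/((25:ℕ):ℝ)) ^ (3:ℕ) := by norm_num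
    _ < (Real.log (100/17)) ^ (3:ℕ) := by
        exact pow_lt_pow_left₀ hu17 (by positivity) (by norm_num)
  have hs34u : (Real.log (50/17)) ^ (0.6:ℝ) < ((22:ℕ):ℝ)/((21:ℕ):ℝ) := by
    refine rpow06_lt hu34pos (by norm_num) ?_
    calc (Real.log (50/17)) ^ (3:ℕ) < (((27:ℕ):ℝ)/((25:ℕ):ℝ)) ^ (3:ℕ) := by
          exact pow_lt_pow_left₀ hu34u hu34pos (by norm_num)
    _ < (((22:ℕ):ℝ)/((21:ℕ):ℝ)) ^ (5:ℕ) := by norm_num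
  have hs34l : ((30:ℕ):ℝ)/((29:ℕ):ℝ) < (Real.log (50/17)) ^ (0.6:ℝ) := by
    refine rpow06_gt hu34pos ?_
    calc (((30:ℕ):ℝ)/((29:ℕ):ℝ)) ^ (5:ℕ) ≤ (((53:ℕ):ℝ)/((50:ℕ):ℝ)) ^ (3:ℕ) := by norm_num
    _ < (Real.log (50/17)) ^ (3:ℕ) := by
        exact pow_lt_pow_left₀ hu34l (by positivity) (by norm_num)
  have hs33 : (Real.log (100/33)) ^ (0.6:ℝ) < ((15:ℕ):ℝ)/((14:ℕ):ℝ) := by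
    refine rpow06_lt hu33pos (by norm_num) ?_
    calc (Real.log (100/33)) ^ (3:ℕ) < (((28:ℕ):ℝ)/((25:ℕ):ℝ)) ^ (3:ℕ) := by
          exact pow_lt_pow_left₀ hu33 hu33pos (by norm_num)
    _ < (((15:ℕ):ℝ)/((14:ℕ):ℝ)) ^ (5:ℕ) := by norm_num
  have hs01 : (Real.log (100:ℝ)) ^ (0.6:ℝ) < ((33:ℕ):ℝ)/((13:ℕ):ℝ) := by
    refine rpow06_lt hu01pos (by norm_num) ?_
    calc (Real.log (100:ℝ)) ^ (3:ℕ) < (((47:ℕ):ℝ)/((10:ℕ):ℝ)) ^ (3:ℕ) := by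
          exact pow_lt_pow_left₀ hu01 hu01pos (by norm_num)
    _ < (((33:ℕ):ℝ)/((13:ℕ):ℝ)) ^ (5:ℕ) := by norm_num
  -- w bounds
  have hW17 : w 0.17 < 0.2467 := by
    rw [hw17]
    calc Real.exp (-((Real.log (100/17)) ^ (0.6:ℝ)))
        < Real.exp (-(((7:ℕ):ℝ)/((5:ℕ):ℝ))) := by
          exact Real.exp_lt_exp.mpr (by linarith)
    _ < 0.2467 := exp_neg_lt' (by norm_num) (by norm_num) (by norm_num)
  have hW34l : (0.3507:ℝ) < w 0.34 := by
    rw [hw34]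
    calc (0.3507:ℝ) < Real.exp (-(((22:ℕ):ℝ)/((21:ℕ):ℝ))) :=
          exp_neg_gt' (by norm_num) (by norm_num) (by norm_num)
    _ < Real.exp (-((Real.log (50/17)) ^ (0.6:ℝ))) := by
          exact Real.exp_lt_exp.mpr (by linarith)
  have hW34u : w 0.34 < 0.3555 := by
    rw [hw34]
    calc Real.exp (-((Real.log (50/17)) ^ (0.6:ℝ)))
        < Real.exp (-(((30:ℕ):ℝ)/((29:ℕ):ℝ))) := by
          exact Real.exp_lt_exp.mpr (by linarith)
    _ < 0.3555 := exp_neg_lt' (by norm_num) (by norm_num) (by norm_num)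
  have hW33 : (0.3424:ℝ) < w 0.33 := by
    rw [hw33]
    calc (0.3424:ℝ) < Real.exp (-(((15:ℕ):ℝ)/((14:ℕ):ℝ))) :=
          exp_neg_gt' (by norm_num) (by norm_num) (by norm_num)
    _ < Real.exp (-((Real.log (100/33)) ^ (0.6:ℝ))) := by
          exact Real.exp_lt_exp.mpr (by linarith)
  have hW01 : (0.0789:ℝ) < w 0.01 := by
    rw [hw01]
    calc (0.0789:ℝ) < Real.exp (-(((33:ℕ):ℝ)/((13:ℕ):ℝ))) :=
          exp_neg_gt' (by norm_num) (by norm_num) (by norm_num)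
    _ < Real.exp (-((Real.log (100:ℝ)) ^ (0.6:ℝ))) := by
          exact Real.exp_lt_exp.mpr (by linarith)
  have hW17pos : 0 < w 0.17 := by rw [hw17]; exact Real.exp_pos _
  -- c = 1.5^0.8 bounds
  set c : ℝ := (1.5:ℝ) ^ (0.8:ℝ) with hc
  have hcpos : 0 < c := Real.rpow_pos_of_pos (by norm_num) _
  have hc5 : c ^ (5:ℕ) = (1.5:ℝ) ^ (4:ℕ) := by
    rw [hc, ← Real.rpow_natCast ((1.5:ℝ) ^ (0.8:ℝ)) 5, ← Real.rpow_mul (by norm_num)]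
    rw [show ((0.8:ℝ) * (5:ℕ)) = ((4:ℕ):ℝ) by norm_num, Real.rpow_natCast]
  have hcl : (1.38:ℝ) < c := by
    refine lt_of_pow_lt_pow_left₀ 5 hcpos.le ?_
    rw [hc5]; norm_num
  have hcu : c < (1.384:ℝ) := by
    refine lt_of_pow_lt_pow_left₀ 5 (by norm_num) ?_
    rw [hc5]; norm_num
  -- v values
  have hv2pos : (0:ℝ) < v 20000 := Real.rpow_pos_of_pos (by norm_num) _
  have hv3 : v 30000 = c * v 20000 := by
    show (30000:ℝ) ^ (0.8:ℝ) = (1.5:ℝ) ^ (0.8:ℝ) * (20000:ℝ) ^ (0.8:ℝ)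
    rw [← Real.mul_rpow (by norm_num) (by norm_num)]
    norm_num
  clear_value w v
  clear hw17 hw34 hw33 hw01 hu17 hu34l hu34u hu33 hu01 hs17 hs34u hs34l hs33 hs01
  clear hu17pos hu34pos hu33pos hu01pos hc5
  have hW01pos : (0:ℝ) < w 0.01 := lt_trans (by norm_num) hW01
  constructor
  · rw [hv3]
    have h1 : w 0.17 * c < w 0.34 := by
      have : w 0.17 * c < 0.2467 * 1.384 := by
        have := mul_lt_mul_of_pos_left hcu hW17pos
        have := mul_lt_mul_of_pos_right hW17 (show (0:ℝ) < 1.384 by norm_num)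
        linarith
      linarith [hW34l]
    calc w 0.17 * (c * v 20000) = (w 0.17 * c) * v 20000 := by ring
    _ < w 0.34 * v 20000 := mul_lt_mul_of_pos_right h1 hv2pos
  · rw [hv3]
    have key : w 0.34 < w 0.01 * c + (w 0.33 - w 0.01) := by
      have h2 : (0.0789:ℝ) * 0.38 < w 0.01 * (c - 1) := by
        have h38 : (0.38:ℝ) < c - 1 := by linarith
        have := mul_lt_mul_of_pos_left h38 hW01pos
        have := mul_lt_mul_of_pos_right hW01 (show (0:ℝ) < 0.38 by norm_num)
        linarith
      nlinarith [hW34u, hW33]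
    calc w 0.34 * v 20000
        < (w 0.01 * c + (w 0.33 - w 0.01)) * v 20000 := mul_lt_mul_of_pos_right key hv2pos
    _ = w 0.01 * (c * v 20000) + (w 0.33 - w 0.01) * v 20000 := by ring
end

section
/- Let r = 0, v(x) = x, and w⁺(p) = exp(-(-ln p)^{0.5}) for p ∈ (0,1], w⁺(0)=0, and let β := 1/w⁺(0.5). For L₁ = {(0.5, 2β); (0.5, 0)} and L₂ = {(0.5, β+1); (0.5, 1)}, we have V(L₁) = V(L₂) = 2, but V(0.5 L₁ + 0.5 L₂) < 2. Hence CPT preferences with these features violate weak betweenness. -/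
open Real Finset

private lemma aux_exp_upper {x b : ℝ} (hx : |x| ≤ 1)
    (h : (∑ m ∈ Finset.range 6, x ^ m / m.factorial) + |x| ^ 6 * (7 / (720 * 6)) ≤ b) :
    Real.exp x ≤ b := by
  have h6 : (0:ℕ) < 6 := by norm_num
  have := Real.exp_bound hx h6
  have h' := (abs_sub_le_iff.1 this).1
  have : Real.exp x ≤ (∑ m ∈ Finset.range 6, x ^ m / m.factorial) +
      |x| ^ 6 * ((6:ℕ).succ / ((6:ℕ).factorial * 6)) := by linarith
  refine le_trans this (le_trans (le_of_eq ?_) h)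
  norm_num [Nat.factorial]

private lemma aux_exp_lower {x b : ℝ} (hx : |x| ≤ 1)
    (h : b ≤ (∑ m ∈ Finset.range 6, x ^ m / m.factorial) - |x| ^ 6 * (7 / (720 * 6))) :
    b ≤ Real.exp x := by
  have h6 : (0:ℕ) < 6 := by norm_num
  have := Real.exp_bound hx h6
  have h' := (abs_sub_le_iff.1 this).2
  have : (∑ m ∈ Finset.range 6, x ^ m / m.factorial) -
      |x| ^ 6 * ((6:ℕ).succ / ((6:ℕ).factorial * 6)) ≤ Real.exp x := by linarith
  refine le_trans (le_trans h (le_of_eq ?_)) this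
  norm_num [Nat.factorial]

theorem stmt_15 :
    let w : ℝ → ℝ := fun p => if p = 0 then 0 else Real.exp (-((-Real.log p) ^ (0.5 : ℝ)))
    let β : ℝ := 1 / w 0.5
    -- V(L₁) = 2, V(L₂) = 2, V(0.5 L₁ + 0.5 L₂) < 2
    2 * β * w 0.5 = 2 ∧
    (β + 1) * w 0.5 + 1 * (1 - w 0.5) = 2 ∧
    2 * β * w 0.25 + (β + 1) * (w 0.5 - w 0.25) + 1 * (w 0.75 - w 0.5) < 2 := by
  intro w β
  -- rewrite the three weights
  have hw5 : w 0.5 = Real.exp (-Real.sqrt (Real.log 2)) := by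
    show (if (0.5:ℝ) = 0 then (0:ℝ) else _) = _
    rw [if_neg (by norm_num)]
    rw [show -Real.log (0.5:ℝ) = Real.log 2 by
      rw [show (0.5:ℝ) = 2⁻¹ by norm_num, Real.log_inv]; ring]
    rw [show (0.5:ℝ) = 1/2 by norm_num, ← Real.sqrt_eq_rpow]
  have hw25 : w 0.25 = Real.exp (-Real.sqrt (2 * Real.log 2)) := by
    show (if (0.25:ℝ) = 0 then (0:ℝ) else _) = _
    rw [if_neg (by norm_num)]
    rw [show -Real.log (0.25:ℝ) = 2 * Real.log 2 by
      rw [show (0.25:ℝ) = (2^2:ℝ)⁻¹ by norm_num, Real.log_inv, Real.log_pow]; push_cast; ring]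
    rw [show (0.5:ℝ) = 1/2 by norm_num, ← Real.sqrt_eq_rpow]
  have hw75 : w 0.75 = Real.exp (-Real.sqrt (Real.log (4/3))) := by
    show (if (0.75:ℝ) = 0 then (0:ℝ) else _) = _
    rw [if_neg (by norm_num)]
    rw [show -Real.log (0.75:ℝ) = Real.log (4/3) by
      rw [show (0.75:ℝ) = (4/3:ℝ)⁻¹ by norm_num, Real.log_inv]; ring]
    rw [show (0.5:ℝ) = 1/2 by norm_num, ← Real.sqrt_eq_rpow]
  set a1 : ℝ := Real.sqrt (Real.log 2) with ha1
  set a2 : ℝ := Real.sqrt (2 * Real.log 2) with ha2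
  set a3 : ℝ := Real.sqrt (Real.log (4/3)) with ha3
  have hw5ne : w 0.5 ≠ 0 := by rw [hw5]; exact Real.exp_ne_zero _
  have hβ : β * w 0.5 = 1 := by
    show (1 / w 0.5) * w 0.5 = 1
    field_simp
  refine ⟨by show 2 * β * w 0.5 = 2; rw [mul_assoc, hβ]; ring, by nlinarith [hβ], ?_⟩
  -- numeric bounds
  have hl2a : (0.6931471803:ℝ) < Real.log 2 := Real.log_two_gt_d9
  have hl2b : Real.log 2 < 0.6931471808 := Real.log_two_lt_d9
  have ha1u : a1 < 0.8326 := (Real.sqrt_lt' (by norm_num)).2 (by nlinarith)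
  have ha1l : (0.8325:ℝ) < a1 := (Real.lt_sqrt (by norm_num)).2 (by nlinarith)
  have ha2u : a2 < 1.1775 := (Real.sqrt_lt' (by norm_num)).2 (by nlinarith)
  have ha2l : (1.1774:ℝ) < a2 := (Real.lt_sqrt (by norm_num)).2 (by nlinarith)
  -- log (4/3) > 0.2872
  have hl43 : (0.2872:ℝ) < Real.log (4/3) := by
    rw [Real.lt_log_iff_exp_lt (by norm_num)]
    have := aux_exp_upper (x := 0.2872) (b := (4/3 : ℝ) - 1/10000)
      (by rw [abs_of_nonneg] <;> norm_num)
      (by rw [abs_of_nonneg (by norm_num : (0:ℝ) ≤ 0.2872)]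
          norm_num [Finset.sum_range_succ, Nat.factorial])
    linarith
  have ha3l : (0.5359:ℝ) < a3 := (Real.lt_sqrt (by norm_num)).2 (by nlinarith)
  -- exponential bounds
  have hU1 : Real.exp (a1 - a2) < 0.7084 := by
    have hm : a1 - a2 < -0.3448 := by linarith
    have h1 : Real.exp (a1 - a2) < Real.exp (-0.3448) := Real.exp_lt_exp.2 hm
    have h2 : Real.exp (-0.3448 : ℝ) ≤ 0.70837 := by
      apply aux_exp_upper (by rw [abs_of_nonpos] <;> norm_num)
      rw [abs_of_nonpos (by norm_num)]
      norm_num [Finset.sum_range_succ, Nat.factorial]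
    linarith
  have hU3 : Real.exp (-a3) < 0.5852 := by
    have h1 : Real.exp (-a3) < Real.exp (-0.5359) := Real.exp_lt_exp.2 (by linarith)
    have h2 : Real.exp (-0.5359 : ℝ) ≤ 0.58516 := by
      apply aux_exp_upper (by rw [abs_of_nonpos] <;> norm_num)
      rw [abs_of_nonpos (by norm_num)]
      norm_num [Finset.sum_range_succ, Nat.factorial]
    linarith
  have hL2 : (0.3079:ℝ) < Real.exp (-a2) := by
    have h1 : Real.exp (-1.1775 : ℝ) < Real.exp (-a2) := Real.exp_lt_exp.2 (by linarith)
    have h2 : (0.55489:ℝ) ≤ Real.exp (-0.58875 : ℝ) := by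
      apply aux_exp_lower (by rw [abs_of_nonpos] <;> norm_num)
      rw [abs_of_nonpos (by norm_num)]
      norm_num [Finset.sum_range_succ, Nat.factorial]
    have h3 : Real.exp (-1.1775 : ℝ) = Real.exp (-0.58875) * Real.exp (-0.58875) := by
      rw [← Real.exp_add]; norm_num
    nlinarith [Real.exp_pos (-0.58875 : ℝ)]
  -- assemble
  rw [hw5, hw25, hw75]
  have hβ' : β = 1 / Real.exp (-a1) := by rw [← hw5]
  have he1 : Real.exp (-a1) > 0 := Real.exp_pos _
  have hdiv : Real.exp (-a2) / Real.exp (-a1) = Real.exp (a1 - a2) := by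
    rw [← Real.exp_sub]; ring_nf
  have key : Real.exp (-a2) / Real.exp (-a1) + Real.exp (-a3) - Real.exp (-a2) < 1 := by
    rw [hdiv]; linarith
  rw [hβ']
  have expand : 2 * (1 / Real.exp (-a1)) * Real.exp (-a2) +
      (1 / Real.exp (-a1) + 1) * (Real.exp (-a1) - Real.exp (-a2)) +
      1 * (Real.exp (-a3) - Real.exp (-a1)) =
      Real.exp (-a2) / Real.exp (-a1) + Real.exp (-a3) - Real.exp (-a2) + 1 := by
    field_simp
    ring
  rw [expand]
  linarith
end

section
/- Consider a finite n-player game with payoff functions x_i : A → ℝ, where each player i has a CPT value functional V_i that is strictly monotone in the sense of first-order stochastic dominance (as holds for CPT with strictly increasing v and w±). If a = (a₁,...,a_n) is a pure Nash equilibrium (a_i ∈ argmax_{a_i'} x_i(a_i', a_{-i}) for all i), then for each i, the best-response black-box strategy set against the belief δ_{a_{-i}} equals the convex hull of the point masses on the pure best responses: B_i(δ_{a_{-i}}) = conv{ δ_{a_i'} : a_i' ∈ argmax_{a_i''} x_i(a_i'', a_{-i}) }. In particular δ_{a_i} ∈ B_i(δ_{a_{-i}}), so every pure Nash equilibrium is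 a black-box strategy Nash equilibrium. -/
private lemma delta_mem_simplex {α : Type*} [Fintype α] [DecidableEq α] (a0 : α) :
    (fun a => if a = a0 then (1:ℝ) else 0) ∈ stdSimplex ℝ α := by
  have h : (fun a => if a = a0 then (1:ℝ) else 0) = fun a => if a0 = a then 1 else 0 := by
    funext a; simp [eq_comm]
  rw [h]; exact ite_eq_mem_stdSimplex ℝ a0

theorem stmt_17 (ι : Type*) [Fintype ι] [DecidableEq ι]
    (A : ι → Type*) [∀ i, Fintype (A i)] [∀ i, DecidableEq (A i)] [∀ i, Nonempty (A i)]
    (x : ∀ i : ι, ((∀ j, A j) → ℝ))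
    -- V i b z is the CPT value for player i of the lottery assigning probability b a
    -- to outcome z a, for a ∈ A i
    (V : ∀ i : ι, (A i → ℝ) → (A i → ℝ) → ℝ)
    -- strict monotonicity with respect to first-order stochastic dominance:
    (hV_strict : ∀ i, ∀ b b' z z' : A i → ℝ,
      b ∈ stdSimplex ℝ (A i) → b' ∈ stdSimplex ℝ (A i) →
      (∀ c : ℝ, (∑ a, if c < z a then b a else 0) ≤ (∑ a, if c < z' a then b' a else 0)) →
      (∃ c : ℝ, (∑ a, if c < z a then b a else 0) < (∑ a, if c < z' a then b' a else 0)) →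
      V i b z < V i b' z')
    (hV_eq : ∀ i, ∀ b b' z z' : A i → ℝ,
      b ∈ stdSimplex ℝ (A i) → b' ∈ stdSimplex ℝ (A i) →
      (∀ c : ℝ, (∑ a, if c < z a then b a else 0) = (∑ a, if c < z' a then b' a else 0)) →
      V i b z = V i b' z')
    -- a is a pure Nash equilibrium
    (a : ∀ j, A j)
    (hNE : ∀ i, ∀ a' : A i, x i (Function.update a i a') ≤ x i a) :
    ∀ i,
      {b : A i → ℝ | b ∈ stdSimplex ℝ (A i) ∧
          ∀ b' ∈ stdSimplex ℝ (A i),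
            V i b' (fun a' => x i (Function.update a i a')) ≤
              V i b (fun a' => x i (Function.update a i a'))}
        = convexHull ℝ {d : A i → ℝ | ∃ a' : A i,
            (∀ a'' : A i, x i (Function.update a i a'') ≤ x i (Function.update a i a')) ∧
            d = fun a'' => if a'' = a' then 1 else 0} ∧
      (fun a'' => if a'' = a i then (1:ℝ) else 0) ∈
        {b : A i → ℝ | b ∈ stdSimplex ℝ (A i) ∧
          ∀ b' ∈ stdSimplex ℝ (A i),
            V i b' (fun a' => x i (Function.update a i a')) ≤
              V i b (fun a' => x i (Function.update a i a'))} := by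
  intro i
  set z : A i → ℝ := fun a' => x i (Function.update a i a') with hz
  have hzai : z (a i) = x i a := by simp [hz, Function.update_eq_self]
  set M : ℝ := z (a i) with hM
  have hle : ∀ a' : A i, z a' ≤ M := by
    intro a'; rw [hzai]; exact hNE i a'
  -- the "support in argmax" set
  set T : Set (A i → ℝ) :=
    {b | b ∈ stdSimplex ℝ (A i) ∧ ∀ a' : A i, z a' < M → b a' = 0} with hT
  -- decumulative of any b ∈ T is the indicator of c < M
  have hdec : ∀ b ∈ T, ∀ c : ℝ,
      (∑ a', if c < z a' then b a' else 0) = if c < M then 1 else 0 := by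
    rintro b ⟨hbs, hbsupp⟩ c
    by_cases hc : c < M
    · rw [if_pos hc, ← hbs.2]
      refine Finset.sum_congr rfl fun a' _ => ?_
      by_cases h : c < z a'
      · rw [if_pos h]
      · rw [if_neg h, hbsupp a' (lt_of_le_of_lt (not_lt.mp h) hc)]
    · rw [if_neg hc]
      refine Finset.sum_eq_zero fun a' _ => ?_
      rw [if_neg]
      exact fun h => hc (lt_of_lt_of_le h (hle a'))
  -- δ (point mass on a i) is in T
  have hδT : (fun a'' => if a'' = a i then (1:ℝ) else 0) ∈ T := by
    refine ⟨delta_mem_simplex (a i), fun a' h => ?_⟩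
    show (if a' = a i then (1:ℝ) else 0) = 0
    rw [if_neg]; rintro rfl; exact lt_irrefl _ h
  have hδs : (fun a'' => if a'' = a i then (1:ℝ) else 0) ∈ stdSimplex ℝ (A i) := hδT.1
  -- all members of T have the same V-value
  have hVT : ∀ b ∈ T, ∀ b' ∈ T, V i b z = V i b' z := by
    intro b hb b' hb'
    exact hV_eq i b b' z z hb.1 hb'.1 (fun c => by rw [hdec b hb c, hdec b' hb' c])
  -- any simplex member not in T has strictly smaller V-value than δ
  have hVlt : ∀ b ∈ stdSimplex ℝ (A i), b ∉ T →
      V i b z < V i (fun a'' => if a'' = a i then (1:ℝ) else 0) z := by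
    intro b hbs hbT
    obtain ⟨a₀, ha₀, hba₀⟩ : ∃ a₀, z a₀ < M ∧ b a₀ ≠ 0 := by
      by_contra h
      push_neg at h
      exact hbT ⟨hbs, fun a' h' => h a' h'⟩
    have hba₀' : 0 < b a₀ := lt_of_le_of_ne (hbs.1 a₀) (Ne.symm hba₀)
    refine hV_strict i b _ z z hbs hδs (fun c => ?_) ⟨z a₀, ?_⟩
    · rw [hdec _ hδT c]
      by_cases hc : c < M
      · rw [if_pos hc, ← hbs.2]
        refine Finset.sum_le_sum fun a' _ => ?_
        by_cases h : c < z a'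
        · rw [if_pos h]
        · rw [if_neg h]; exact hbs.1 a'
      · rw [if_neg hc]
        refine le_of_eq (Finset.sum_eq_zero fun a' _ => ?_)
        rw [if_neg]
        exact fun h => hc (lt_of_lt_of_le h (hle a'))
    · rw [hdec _ hδT (z a₀), if_pos ha₀]
      have h1 : (∑ a', if z a₀ < z a' then b a' else 0) ≤
          ∑ a', (if a' = a₀ then 0 else b a') := by
        refine Finset.sum_le_sum fun a' _ => ?_
        by_cases h : a' = a₀
        · subst h; rw [if_pos rfl, if_neg (lt_irrefl _)]
        · rw [if_neg h]
          by_cases h' : z a₀ < z a'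
          · rw [if_pos h']
          · rw [if_neg h']; exact hbs.1 a'
      have h2 : (∑ a', if a' = a₀ then (0:ℝ) else b a') = 1 - b a₀ := by
        have : ∀ a' : A i, (if a' = a₀ then (0:ℝ) else b a')
            = b a' - (if a' = a₀ then b a' else 0) := by
          intro a'; by_cases h : a' = a₀ <;> simp [h]
        simp_rw [this]
        rw [Finset.sum_sub_distrib, hbs.2, Finset.sum_ite_eq' Finset.univ a₀ b,
          if_pos (Finset.mem_univ a₀)]
      calc (∑ a', if z a₀ < z a' then b a' else 0) ≤ 1 - b a₀ := h2 ▸ h1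
        _ < 1 := by linarith
  -- T is exactly the best-response set
  have hTeq : {b : A i → ℝ | b ∈ stdSimplex ℝ (A i) ∧
      ∀ b' ∈ stdSimplex ℝ (A i), V i b' z ≤ V i b z} = T := by
    ext b
    constructor
    · rintro ⟨hbs, hbmax⟩
      by_contra hbT
      exact absurd (hbmax _ hδs) (not_le.mpr (hVlt b hbs hbT))
    · intro hbT
      refine ⟨hbT.1, fun b' hb's => ?_⟩
      by_cases hb'T : b' ∈ T
      · exact le_of_eq (hVT b' hb'T b hbT)
      · calc V i b' z ≤ V i (fun a'' => if a'' = a i then (1:ℝ) else 0) z :=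
              le_of_lt (hVlt b' hb's hb'T)
          _ = V i b z := hVT _ hδT b hbT
  -- T equals the convex hull of the argmax point masses
  have hargmax : ∀ a' : A i, (∀ a'' : A i, z a'' ≤ z a') ↔ ¬ z a' < M := by
    intro a'
    constructor
    · intro h h'; exact absurd (h (a i)) (not_le.mpr h')
    · intro h a''; exact le_trans (hle a'') (not_lt.mp h)
  have hhull : T = convexHull ℝ {d : A i → ℝ | ∃ a' : A i,
      (∀ a'' : A i, z a'' ≤ z a') ∧ d = fun a'' => if a'' = a' then 1 else 0} := by
    apply Set.Subset.antisymm
    · -- T ⊆ hull : write b as center of mass of point masses on its support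
      rintro b ⟨hbs, hbsupp⟩
      have hsum1 : (∑ a' ∈ Finset.univ.filter (fun a' => ¬ z a' < M), b a') = 1 := by
        rw [← hbs.2]
        apply Finset.sum_subset (Finset.subset_univ _)
        intro a' _ h
        simp only [Finset.mem_filter, Finset.mem_univ, true_and, not_not] at h
        exact hbsupp a' h
      have := Finset.centerMass_mem_convexHull
        (s := {d : A i → ℝ | ∃ a' : A i,
          (∀ a'' : A i, z a'' ≤ z a') ∧ d = fun a'' => if a'' = a' then 1 else 0})
        (Finset.univ.filter (fun a' => ¬ z a' < M))
        (w := b) (fun a' _ => hbs.1 a') (by rw [hsum1]; norm_num)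
        (z := fun a' => fun a'' => if a'' = a' then (1:ℝ) else 0)
        (fun a' ha' => ⟨a', (hargmax a').mpr (by simpa using ha'), rfl⟩)
      rwa [Finset.centerMass_eq_of_sum_1 _ _ hsum1, show (∑ a' ∈ Finset.univ.filter
          (fun a' => ¬ z a' < M), b a' • fun a'' => if a'' = a' then (1:ℝ) else 0) = b
        from ?_] at this
      funext a''
      rw [Finset.sum_apply]
      simp only [Pi.smul_apply, smul_eq_mul, mul_ite, mul_one, mul_zero]
      rw [Finset.sum_ite_eq _ a'' b]
      by_cases h : a'' ∈ Finset.univ.filter (fun a' => ¬ z a' < M)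
      · rw [if_pos h]
      · rw [if_neg h]
        simp only [Finset.mem_filter, Finset.mem_univ, true_and, not_not] at h
        exact (hbsupp a'' h).symm
    · -- hull ⊆ T : T is convex and contains the generators
      apply convexHull_min
      · rintro d ⟨a', ha', rfl⟩
        refine ⟨delta_mem_simplex a', fun a'' h => ?_⟩
        show (if a'' = a' then (1:ℝ) else 0) = 0
        rw [if_neg]; rintro rfl; exact absurd (ha' (a i)) (not_le.mpr h)
      · rintro b ⟨hbs, hb0⟩ b' ⟨hb's, hb'0⟩ s t hs ht hst
        refine ⟨(convex_stdSimplex ℝ (A i)) hbs hb's hs ht hst, fun a' h => ?_⟩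
        simp [hb0 a' h, hb'0 a' h]
  exact ⟨by rw [hTeq, hhull], hTeq ▸ hδT⟩
end

section
/- Let w⁺(p) = exp(-(-ln p)^{0.5}) for p ∈ (0,1] with w⁺(0)=0, and define for p, q ∈ [0,1]: V₁(p,q) := 4·w⁺((1-p)(1-q)) + 3·(w⁺((1-p)(1-q) + p(1-q)) - w⁺((1-p)(1-q))) + 1·(w⁺((1-p)(1-q) + p(1-q) + pq) - w⁺((1-p)(1-q) + p(1-q))), and V₂(p,q) := p(1-q) + q(1-p). Then there is no pair (p,q) ∈ [0,1]² such that simultaneously p ∈ argmax_{p' ∈ [0,1]} V₁(p', q) and q ∈ argmax_{q' ∈ [0,1]} V₂(p, q'). -/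
/-!
Player 2's payoff is strictly monotone in q unless p = 1/2, which forces q = 1 when p < 1/2 and
q = 0 when p > 1/2; then player 1's payoff is w(p') resp. 3 + w(1 - p'), and the pure strategy
reaching w(1) = 1 beats p. At p = 1/2, with t = 1 - q, player 1's payoffs at p' = 0, 1/2, 1 are
4 w(t), 2 w(t) + w(t/2) + w((1+t)/2) and 2 w(t) + 1, so p = 1/2 is a best response only if
w(t/2) + w((1+t)/2) ≥ max 1 (2 w(t)). This fails on all of [0, 1]: the sum stays below 1 for
t ≤ 0.65 and below 2 w(t) for t ≥ 0.65. Both are checked by monotonicity of w on a few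
intervals, evaluating w at rational points through w(exp(-s²)) = exp(-s) and Taylor bounds on exp.
-/

open Real Set

noncomputable def prelecWeight (α p : ℝ) : ℝ :=
  if p = 0 then 0 else exp (-((-log p) ^ α))

section PrelecWeight

variable {α : ℝ}

@[simp]
theorem prelecWeight_zero : prelecWeight α 0 = 0 := if_pos rfl

@[simp]
theorem prelecWeight_one (hα : α ≠ 0) : prelecWeight α 1 = 1 := by
  simp [prelecWeight, zero_rpow hα]

theorem prelecWeight_exp_neg (t : ℝ) : prelecWeight α (exp (-t)) = exp (-t ^ α) := by
  simp [prelecWeight, (exp_pos _).ne']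

theorem prelecWeight_lt_one {x : ℝ} (hx0 : 0 ≤ x) (hx1 : x < 1) :
    prelecWeight α x < 1 := by
  rcases hx0.eq_or_lt with rfl | hx0
  · simp
  have hlog : 0 < -log x := neg_pos.2 (log_neg hx0 hx1)
  rw [prelecWeight, if_neg hx0.ne', exp_lt_one_iff, neg_lt_zero]
  exact rpow_pos_of_pos hlog α

theorem prelecWeight_monotoneOn (hα : 0 ≤ α) : MonotoneOn (prelecWeight α) (Icc 0 1) := by
  rintro x ⟨hx0, -⟩ y ⟨-, hy1⟩ hxy
  rcases hx0.eq_or_lt with rfl | hx0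
  · rw [prelecWeight_zero]
    unfold prelecWeight
    split_ifs <;> positivity
  have hy0 := hx0.trans_le hxy
  rw [prelecWeight, prelecWeight, if_neg hx0.ne', if_neg hy0.ne', exp_le_exp, neg_le_neg_iff]
  exact rpow_le_rpow (neg_nonneg.2 (log_nonpos hy0.le hy1)) (neg_le_neg (log_le_log hx0 hxy)) hα

theorem prelecWeight_add_le_add {t c d : ℝ} (hα : 0 ≤ α) (ht : 0 ≤ t) (hc : t / 2 ≤ c)
    (hc1 : c ≤ 1) (hd : (1 + t) / 2 ≤ d) (hd1 : d ≤ 1) :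
    prelecWeight α (t / 2) + prelecWeight α ((1 + t) / 2) ≤
      prelecWeight α c + prelecWeight α d := by
  have hmono := prelecWeight_monotoneOn hα
  gcongr
  · exact hmono ⟨by positivity, by linarith⟩ ⟨by linarith, hc1⟩ hc
  · exact hmono ⟨by positivity, by linarith⟩ ⟨by linarith, hd1⟩ hd

end PrelecWeight

theorem prelecWeight_half_exp_neg_sq {s : ℝ} (hs : 0 ≤ s) :
    prelecWeight 0.5 (exp (-s ^ 2)) = exp (-s) := by
  rw [prelecWeight_exp_neg, show (0.5 : ℝ) = 1 / 2 by norm_num, ← sqrt_eq_rpow, sqrt_sq hs]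

noncomputable def expNegTaylor (y : ℝ) : ℝ :=
  1 - y + y ^ 2 / 2 - y ^ 3 / 6 + y ^ 4 / 24 - y ^ 5 / 120

-- 7 / 4320 = (n + 1) / (n! * n) for n = 6, the remainder constant of `Real.exp_bound`.
theorem abs_exp_neg_sub_expNegTaylor_le {y : ℝ} (h0 : 0 ≤ y) (h1 : y ≤ 1) :
    |exp (-y) - expNegTaylor y| ≤ 7 * y ^ 6 / 4320 := by
  have h := Real.exp_bound (x := -y) (by rwa [abs_neg, abs_of_nonneg h0]) (n := 6) (by norm_num)
  simp only [Finset.sum_range_succ, Finset.sum_range_zero, abs_neg, abs_of_nonneg h0] at h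
  convert h using 2
  · simp [expNegTaylor, Nat.factorial]; ring
  · norm_num [Nat.factorial]; ring

theorem expNegTaylor_sub_nonneg {y : ℝ} (h0 : 0 ≤ y) (h1 : y ≤ 1) :
    0 ≤ expNegTaylor y - 7 * y ^ 6 / 4320 := by
  unfold expNegTaylor
  nlinarith [pow_nonneg h0 2, pow_nonneg h0 3, pow_nonneg h0 4, pow_nonneg h0 5,
    mul_le_mul_of_nonneg_left h1 (pow_nonneg h0 2), mul_le_mul_of_nonneg_left h1 (pow_nonneg h0 4),
    mul_le_mul_of_nonneg_left h1 (pow_nonneg h0 5)]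

-- Since exp (-a) = exp (-(a / 2)) ^ 2, the Taylor bounds on [0, 1] give bounds for a ∈ [0, 2].
noncomputable def expNegLower (a : ℝ) : ℝ :=
  (expNegTaylor (a / 2) - 7 * (a / 2) ^ 6 / 4320) ^ 2

noncomputable def expNegUpper (a : ℝ) : ℝ :=
  (expNegTaylor (a / 2) + 7 * (a / 2) ^ 6 / 4320) ^ 2

theorem exp_neg_eq_sq_exp_neg_half (a : ℝ) : exp (-a) = exp (-(a / 2)) ^ 2 := by
  rw [sq, ← exp_add]; ring_nf

theorem expNegLower_le_exp_neg {a : ℝ} (h0 : 0 ≤ a) (h2 : a ≤ 2) :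
    expNegLower a ≤ exp (-a) := by
  have h := abs_le.1 (abs_exp_neg_sub_expNegTaylor_le (y := a / 2) (by positivity) (by linarith))
  rw [exp_neg_eq_sq_exp_neg_half, expNegLower]
  exact pow_le_pow_left₀ (expNegTaylor_sub_nonneg (by positivity) (by linarith)) (by linarith) 2

theorem exp_neg_le_expNegUpper {a : ℝ} (h0 : 0 ≤ a) (h2 : a ≤ 2) :
    exp (-a) ≤ expNegUpper a := by
  have h := abs_le.1 (abs_exp_neg_sub_expNegTaylor_le (y := a / 2) (by positivity) (by linarith))
  rw [exp_neg_eq_sq_exp_neg_half, expNegUpper]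
  exact pow_le_pow_left₀ (exp_pos _).le (by linarith) 2

theorem prelecWeight_half_le_of_le_expNegLower {x s U : ℝ} (hx0 : 0 ≤ x) (hs : 0 ≤ s)
    (hs2 : s ^ 2 ≤ 2) (hx : x ≤ expNegLower (s ^ 2)) (hU : expNegUpper s ≤ U) :
    prelecWeight 0.5 x ≤ U := by
  have hs_le : s ≤ 2 := by nlinarith
  have hx' : x ≤ exp (-s ^ 2) := hx.trans (expNegLower_le_exp_neg (sq_nonneg s) hs2)
  have hexp : exp (-s ^ 2) ≤ 1 := exp_le_one_iff.2 (by simp; positivity)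
  calc prelecWeight 0.5 x ≤ prelecWeight 0.5 (exp (-s ^ 2)) :=
        prelecWeight_monotoneOn (by norm_num) ⟨hx0, hx'.trans hexp⟩ ⟨(exp_pos _).le, hexp⟩
          hx'
    _ = exp (-s) := prelecWeight_half_exp_neg_sq hs
    _ ≤ U := (exp_neg_le_expNegUpper hs hs_le).trans hU

theorem le_prelecWeight_half_of_expNegUpper_le {x s L : ℝ} (hx1 : x ≤ 1) (hs : 0 ≤ s)
    (hs2 : s ^ 2 ≤ 2) (hx : expNegUpper (s ^ 2) ≤ x) (hL : L ≤ expNegLower s) :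
    L ≤ prelecWeight 0.5 x := by
  have hs_le : s ≤ 2 := by nlinarith
  have hx' : exp (-s ^ 2) ≤ x := (exp_neg_le_expNegUpper (sq_nonneg s) hs2).trans hx
  calc L ≤ exp (-s) := hL.trans (expNegLower_le_exp_neg hs hs_le)
    _ = prelecWeight 0.5 (exp (-s ^ 2)) := (prelecWeight_half_exp_neg_sq hs).symm
    _ ≤ prelecWeight 0.5 x :=
        prelecWeight_monotoneOn (by norm_num) ⟨(exp_pos _).le, hx'.trans hx1⟩
          ⟨(exp_pos _).le.trans hx', hx1⟩ hx'

theorem prelecWeight_half_add_lt_one {t : ℝ} (ht0 : 0 ≤ t) (ht : t ≤ 0.65) :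
    prelecWeight 0.5 (t / 2) + prelecWeight 0.5 ((1 + t) / 2) < 1 := by
  have h₁ : prelecWeight 0.5 0.325 ≤ 0.3465 := by
    apply prelecWeight_half_le_of_le_expNegLower (s := 1.06) <;>
      norm_num [expNegLower, expNegUpper, expNegTaylor]
  have h₂ : prelecWeight 0.5 0.825 ≤ 0.6454 := by
    apply prelecWeight_half_le_of_le_expNegLower (s := 0.438) <;>
      norm_num [expNegLower, expNegUpper, expNegTaylor]
  linarith [prelecWeight_add_le_add (α := 0.5) (c := 0.325) (d := 0.825) (by norm_num) ht0
    (by linarith) (by norm_num) (by linarith) (by norm_num)]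

theorem prelecWeight_half_add_lt_two_mul {t : ℝ} (ht : 0.65 ≤ t) (ht1 : t ≤ 1) :
    prelecWeight 0.5 (t / 2) + prelecWeight 0.5 ((1 + t) / 2) < 2 * prelecWeight 0.5 t := by
  set w := prelecWeight 0.5
  have hmono : MonotoneOn w (Icc 0 1) := prelecWeight_monotoneOn (by norm_num)
  have hsum (c d : ℝ) (hc : t / 2 ≤ c) (hc1 : c ≤ 1) (hd : (1 + t) / 2 ≤ d)
      (hd1 : d ≤ 1) : w (t / 2) + w ((1 + t) / 2) ≤ w c + w d :=
    prelecWeight_add_le_add (by norm_num) (by linarith) hc hc1 hd hd1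
  have hw (a : ℝ) (ha : 0 ≤ a) (hat : a ≤ t) : w a ≤ w t :=
    hmono ⟨ha, hat.trans ht1⟩ ⟨ha.trans hat, ht1⟩ hat
  have l₁ : 0.5183 ≤ w 0.65 := by
    apply le_prelecWeight_half_of_expNegUpper_le (s := 0.657) <;>
      norm_num [expNegLower, expNegUpper, expNegTaylor]
  have l₂ : 0.5499 ≤ w 0.7 := by
    apply le_prelecWeight_half_of_expNegUpper_le (s := 0.598) <;>
      norm_num [expNegLower, expNegUpper, expNegTaylor]
  have l₃ : 0.6071 ≤ w 0.78 := by
    apply le_prelecWeight_half_of_expNegUpper_le (s := 0.499) <;>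
      norm_num [expNegLower, expNegUpper, expNegTaylor]
  have l₄ : 0.7225 ≤ w 0.9 := by
    apply le_prelecWeight_half_of_expNegUpper_le (s := 0.325) <;>
      norm_num [expNegLower, expNegUpper, expNegTaylor]
  have u₁ : w 0.35 ≤ 0.3592 := by
    apply prelecWeight_half_le_of_le_expNegLower (s := 1.024) <;>
      norm_num [expNegLower, expNegUpper, expNegTaylor]
  have u₂ : w 0.85 ≤ 0.6684 := by
    apply prelecWeight_half_le_of_le_expNegLower (s := 0.403) <;>
      norm_num [expNegLower, expNegUpper, expNegTaylor]
  have u₃ : w 0.39 ≤ 0.3791 := by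
    apply prelecWeight_half_le_of_le_expNegLower (s := 0.97) <;>
      norm_num [expNegLower, expNegUpper, expNegTaylor]
  have u₄ : w 0.89 ≤ 0.7111 := by
    apply prelecWeight_half_le_of_le_expNegLower (s := 0.341) <;>
      norm_num [expNegLower, expNegUpper, expNegTaylor]
  have u₅ : w 0.45 ≤ 0.4095 := by
    apply prelecWeight_half_le_of_le_expNegLower (s := 0.893) <;>
      norm_num [expNegLower, expNegUpper, expNegTaylor]
  have u₆ : w 0.95 ≤ 0.7978 := by
    apply prelecWeight_half_le_of_le_expNegLower (s := 0.226) <;>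
      norm_num [expNegLower, expNegUpper, expNegTaylor]
  have u₇ : w 0.5 ≤ 0.4352 := by
    apply prelecWeight_half_le_of_le_expNegLower (s := 0.832) <;>
      norm_num [expNegLower, expNegUpper, expNegTaylor]
  have u₈ : w 1 = 1 := prelecWeight_one (by norm_num)
  -- On each piece [a, b] cut out below, w (b / 2) + w ((1 + b) / 2) < 2 * w a.
  rcases le_or_gt t 0.7 with h₁ | h₁
  · linarith [hsum 0.35 0.85 (by linarith) (by norm_num) (by linarith) (by norm_num),
      hw 0.65 (by norm_num) ht]
  rcases le_or_gt t 0.78 with h₂ | h₂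
  · linarith [hsum 0.39 0.89 (by linarith) (by norm_num) (by linarith) (by norm_num),
      hw 0.7 (by norm_num) h₁.le]
  rcases le_or_gt t 0.9 with h₃ | h₃
  · linarith [hsum 0.45 0.95 (by linarith) (by norm_num) (by linarith) (by norm_num),
      hw 0.78 (by norm_num) h₂.le]
  · linarith [hsum 0.5 1 (by linarith) (by norm_num) (by linarith) le_rfl,
      hw 0.9 (by norm_num) h₃.le]

theorem stmt_19 :
    let w : ℝ → ℝ := fun p => if p = 0 then 0 else Real.exp (-((-Real.log p) ^ (0.5 : ℝ)))
    let V₁ : ℝ → ℝ → ℝ := fun p q =>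
      4 * w ((1 - p) * (1 - q))
      + 3 * (w ((1 - p) * (1 - q) + p * (1 - q)) - w ((1 - p) * (1 - q)))
      + 1 * (w ((1 - p) * (1 - q) + p * (1 - q) + p * q)
              - w ((1 - p) * (1 - q) + p * (1 - q)))
    let V₂ : ℝ → ℝ → ℝ := fun p q => p * (1 - q) + q * (1 - p)
    ¬ ∃ p ∈ Set.Icc (0:ℝ) 1, ∃ q ∈ Set.Icc (0:ℝ) 1,
        (∀ p' ∈ Set.Icc (0:ℝ) 1, V₁ p' q ≤ V₁ p q) ∧
        (∀ q' ∈ Set.Icc (0:ℝ) 1, V₂ p q' ≤ V₂ p q) := by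
  intro w V₁ V₂
  rintro ⟨p, ⟨hp0, hp1⟩, q, ⟨hq0, hq1⟩, hbest₁, hbest₂⟩
  have hw : w = prelecWeight 0.5 := rfl
  have hw₁ : prelecWeight 0.5 1 = 1 := prelecWeight_one (by norm_num)
  have hV₁ (p' : ℝ) :
      V₁ p' q = w ((1 - p') * (1 - q)) + 2 * w (1 - q) + w (1 - q + p' * q) := by
    simp only [V₁, show (1 - p') * (1 - q) + p' * (1 - q) = 1 - q by ring]; ring
  have h₀ := hbest₁ 0 ⟨le_rfl, zero_le_one⟩
  have h₁ := hbest₁ 1 ⟨zero_le_one, le_rfl⟩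
  simp only [hV₁, hw, sub_zero, one_mul, zero_mul, add_zero, sub_self, sub_add_cancel,
    prelecWeight_zero, hw₁] at h₀ h₁
  rcases lt_trichotomy p (1 / 2) with hp | rfl | hp
  · obtain rfl : q = 1 := by nlinarith [hbest₂ 1 ⟨zero_le_one, le_rfl⟩]
    simp only [sub_self, mul_zero, zero_add, mul_one, prelecWeight_zero] at h₁
    linarith [prelecWeight_lt_one (α := 0.5) hp0 (by linarith)]
  · rw [show (1 - 1 / 2) * (1 - q) = (1 - q) / 2 by ring,
      show 1 - q + 1 / 2 * q = (1 + (1 - q)) / 2 by ring] at h₀ h₁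
    rcases le_or_gt (1 - q) 0.65 with hq | hq
    · linarith [prelecWeight_half_add_lt_one (by linarith) hq]
    · linarith [prelecWeight_half_add_lt_two_mul hq.le (by linarith)]
  · obtain rfl : q = 0 := by nlinarith [hbest₂ 0 ⟨le_rfl, zero_le_one⟩]
    simp only [sub_zero, mul_one, mul_zero, add_zero, hw₁] at h₀
    linarith [prelecWeight_lt_one (α := 0.5) (x := 1 - p) (by linarith) (by linarith)]
end
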